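/- arXiv:1009.4779 — 7 statements merged into one kernel-verified Lean document; each statement's English description precedes it below -/
import Mathlib

section
/- Let {·,·} be a Poisson bracket on a commutative ring (or algebra) A (bilinear, antisymmetric, satisfying the Jacobi identity and the Leibniz rule). Let x^1, x^2, x^3 ∈ A, set γ² = {x¹,x²}² + {x²,x³}² + {x³,x¹}², and assume γ is invertible with γ² = γ·γ. Then for each i ∈ {1,2,3}: ∑_{j,k,l,n=1}^{3} (1/2) ε_{kln} { γ^{-2} {x^i, x^j}{x^j, x^k}, γ^{-1}{x^l, x^n} } = 0, where ε is the Levi-Civita symbol. -/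
/-!
Write `nₖ = {x^(k+1), x^(k+2)}` and `ν = γ⁻¹ n`, so that `∑ₖ νₖ² = 1`. Contracting with
`ε` turns the sum into `∑ₖ {γ⁻² ∑ⱼ {xⁱ,xʲ}{xʲ,xᵏ}, νₖ}`, and since `{xⁱ,xʲ}` is the
antisymmetric matrix of the vector `n`, `∑ⱼ {xⁱ,xʲ}{xʲ,xᵏ} = nᵢnₖ - δᵢₖ γ²`. What is
left is `∑ₖ {νᵢνₖ - δᵢₖ, νₖ} = ∑ₖ νₖ{νᵢ,νₖ} = ½{νᵢ, ∑ₖ νₖ²} = ½{νᵢ, 1} = 0`.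
-/

open scoped BigOperators

/-- The totally antisymmetric Levi-Civita symbol on `n` indices. -/
noncomputable def leviCivita {n : ℕ} (σ : Fin n → Fin n) : ℝ :=
  if h : Function.Bijective σ then ((Equiv.Perm.sign (Equiv.ofBijective σ h) : ℤ) : ℝ) else 0

open Finset Function

section LeviCivita

variable {n : ℕ}

theorem leviCivita_eq_zero_of_apply_eq {σ : Fin n → Fin n} {a b : Fin n} (hab : a ≠ b)
    (h : σ a = σ b) : leviCivita σ = 0 :=
  dif_neg fun hσ => hab (hσ.injective h)

theorem leviCivita_eq_of_sign_eq {σ τ : Fin n → Fin n} (hl : LeftInverse τ σ)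
    (hr : RightInverse τ σ) {s : ℤˣ} (hs : Equiv.Perm.sign ⟨σ, τ, hl, hr⟩ = s) :
    leviCivita σ = s := by
  rw [leviCivita, dif_pos ⟨hl.injective, hr.surjective⟩, ← hs]
  congr
  exact Equiv.ext fun _ => rfl

theorem leviCivita_vec_aab (a b : Fin 3) : leviCivita ![a, a, b] = 0 :=
  leviCivita_eq_zero_of_apply_eq (a := 0) (b := 1) (by decide) rfl

theorem leviCivita_vec_aba (a b : Fin 3) : leviCivita ![a, b, a] = 0 :=
  leviCivita_eq_zero_of_apply_eq (a := 0) (b := 2) (by decide) rfl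

theorem leviCivita_vec_baa (a b : Fin 3) : leviCivita ![b, a, a] = 0 :=
  leviCivita_eq_zero_of_apply_eq (a := 1) (b := 2) (by decide) rfl

theorem leviCivita_012 : leviCivita ![0, 1, 2] = 1 := by
  simpa using
    leviCivita_eq_of_sign_eq (τ := ![0, 1, 2]) (by decide) (by decide) (s := 1) (by decide)

theorem leviCivita_021 : leviCivita ![0, 2, 1] = -1 := by
  simpa using
    leviCivita_eq_of_sign_eq (τ := ![0, 2, 1]) (by decide) (by decide) (s := -1) (by decide)

theorem leviCivita_102 : leviCivita ![1, 0, 2] = -1 := by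
  simpa using
    leviCivita_eq_of_sign_eq (τ := ![1, 0, 2]) (by decide) (by decide) (s := -1) (by decide)

theorem leviCivita_120 : leviCivita ![1, 2, 0] = 1 := by
  simpa using
    leviCivita_eq_of_sign_eq (τ := ![2, 0, 1]) (by decide) (by decide) (s := 1) (by decide)

theorem leviCivita_201 : leviCivita ![2, 0, 1] = 1 := by
  simpa using
    leviCivita_eq_of_sign_eq (τ := ![1, 2, 0]) (by decide) (by decide) (s := 1) (by decide)

theorem leviCivita_210 : leviCivita ![2, 1, 0] = -1 := by
  simpa using
    leviCivita_eq_of_sign_eq (τ := ![2, 1, 0]) (by decide) (by decide) (s := -1) (by decide)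

theorem sum_half_leviCivita_smul {M : Type*} [AddCommGroup M] [Module ℝ M]
    (f : Fin 3 → Fin 3 → M) (hf : ∀ l m, f m l = -f l m) (k : Fin 3) :
    ∑ l, ∑ m, ((1 / 2 : ℝ) * leviCivita ![k, l, m]) • f l m = f (k + 1) (k + 2) := by
  fin_cases k <;>
    simp only [Fin.zero_eta, Fin.mk_one, Fin.reduceFinMk, Fin.isValue, Fin.reduceAdd,
      Fin.sum_univ_three, leviCivita_vec_aab, leviCivita_vec_aba, leviCivita_vec_baa,
      leviCivita_012, leviCivita_021, leviCivita_102, leviCivita_120, leviCivita_201,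
      leviCivita_210, hf 2 1, hf 0 2, hf 1 0] <;>
    module

end LeviCivita

section Bracket

variable {A : Type*} [CommRing A] {br : A → A → A}

theorem bracket_add_right (hadd : ∀ a b c : A, br (a + b) c = br a c + br b c)
    (hskew : ∀ a b : A, br a b = -br b a) (a b c : A) :
    br a (b + c) = br a b + br a c := by
  rw [hskew, hadd, neg_add, ← hskew, ← hskew]

theorem bracket_sum_left (hadd : ∀ a b c : A, br (a + b) c = br a c + br b c)
    {ι : Type*} (s : Finset ι) (f : ι → A) (c : A) :
    br (∑ i ∈ s, f i) c = ∑ i ∈ s, br (f i) c :=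
  map_sum (AddMonoidHom.mk' (br · c) (hadd · · c)) f s

theorem bracket_sum_right (hadd : ∀ a b c : A, br (a + b) c = br a c + br b c)
    (hskew : ∀ a b : A, br a b = -br b a) {ι : Type*} (s : Finset ι) (f : ι → A)
    (a : A) :
    br a (∑ i ∈ s, f i) = ∑ i ∈ s, br a (f i) :=
  map_sum (AddMonoidHom.mk' (br a) (bracket_add_right hadd hskew a)) f s

theorem bracket_neg_right (hadd : ∀ a b c : A, br (a + b) c = br a c + br b c)
    (hskew : ∀ a b : A, br a b = -br b a) (a b : A) : br a (-b) = -br a b :=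
  map_neg (AddMonoidHom.mk' (br a) (bracket_add_right hadd hskew a)) b

theorem bracket_sub_left (hadd : ∀ a b c : A, br (a + b) c = br a c + br b c)
    (a b c : A) : br (a - b) c = br a c - br b c :=
  map_sub (AddMonoidHom.mk' (br · c) (hadd · · c)) a b

theorem bracket_self [IsAddTorsionFree A] (hskew : ∀ a b : A, br a b = -br b a) (a : A) :
    br a a = 0 :=
  self_eq_neg.mp (hskew a a)

theorem bracket_one_right (hleibniz : ∀ a b c : A, br a (b * c) = br a b * c + b * br a c)
    (a : A) : br a 1 = 0 := by
  simpa using hleibniz a 1 1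

theorem bracket_one_left (hskew : ∀ a b : A, br a b = -br b a)
    (hleibniz : ∀ a b c : A, br a (b * c) = br a b * c + b * br a c) (a : A) : br 1 a = 0 := by
  rw [hskew, bracket_one_right hleibniz, neg_zero]

theorem bracket_mul_left (hskew : ∀ a b : A, br a b = -br b a)
    (hleibniz : ∀ a b c : A, br a (b * c) = br a b * c + b * br a c) (a b c : A) :
    br (a * b) c = a * br b c + b * br a c := by
  rw [hskew, hleibniz, hskew c a, hskew c b]
  ring

theorem sum_mul_bracket_eq_zero_of_sum_sq_eq_one [IsAddTorsionFree A]
    (hadd : ∀ a b c : A, br (a + b) c = br a c + br b c)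
    (hskew : ∀ a b : A, br a b = -br b a)
    (hleibniz : ∀ a b c : A, br a (b * c) = br a b * c + b * br a c)
    {ι : Type*} [Fintype ι] {ν : ι → A} (hν : ∑ k, ν k ^ 2 = 1) (a : A) :
    ∑ k, ν k * br a (ν k) = 0 := by
  have h : 2 • ∑ k, ν k * br a (ν k) = 0 := by
    calc 2 • ∑ k, ν k * br a (ν k) = br a (∑ k, ν k ^ 2) := by
          rw [bracket_sum_right hadd hskew, smul_sum]
          refine sum_congr rfl fun k _ => ?_
          rw [sq, hleibniz, two_nsmul]
          ring
      _ = 0 := by rw [hν, bracket_one_right hleibniz]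
  exact nsmul_right_injective two_ne_zero (h.trans (smul_zero 2).symm)

theorem sum_bracket_mul_sub_ite_eq_zero [IsAddTorsionFree A]
    (hadd : ∀ a b c : A, br (a + b) c = br a c + br b c)
    (hskew : ∀ a b : A, br a b = -br b a)
    (hleibniz : ∀ a b c : A, br a (b * c) = br a b * c + b * br a c)
    {ι : Type*} [Fintype ι] [DecidableEq ι] {ν : ι → A} (hν : ∑ k, ν k ^ 2 = 1) (i : ι) :
    ∑ k, br (ν i * ν k - if i = k then 1 else 0) (ν k) = 0 := by
  have hzero (c : A) : br 0 c = 0 := by simpa using bracket_sub_left hadd 0 0 c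
  simp only [bracket_sub_left hadd, sum_sub_distrib, bracket_mul_left hskew hleibniz,
    bracket_self hskew, mul_zero, zero_add,
    sum_mul_bracket_eq_zero_of_sum_sq_eq_one hadd hskew hleibniz hν]
  rw [Fintype.sum_eq_single i fun k hk => by rw [if_neg (Ne.symm hk), hzero], if_pos rfl,
    bracket_one_left hskew hleibniz, sub_zero]

end Bracket

theorem sum_mul_eq_of_antisymm_fin_three {R : Type*} [CommRing R] {B : Fin 3 → Fin 3 → R}
    (hdiag : ∀ i, B i i = 0) (hB : ∀ i j, B j i = -B i j) (i k : Fin 3) :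
    ∑ j, B i j * B j k =
      B (i + 1) (i + 2) * B (k + 1) (k + 2) -
        if i = k then ∑ p, B (p + 1) (p + 2) ^ 2 else 0 := by
  fin_cases i <;> fin_cases k <;>
    simp only [Fin.zero_eta, Fin.mk_one, Fin.reduceFinMk, Fin.isValue, Fin.reduceAdd,
      Fin.reduceEq, if_true, if_false, Fin.sum_univ_three, hdiag, hB 1 0, hB 2 1, hB 0 2] <;>
    ring

theorem sum_sq_mul_eq_one_of_mul_eq_one {R ι : Type*} [CommRing R] [Fintype ι] {γ γi : R}
    (hγinv : γ * γi = 1) {n : ι → R} (hn : ∑ k, n k ^ 2 = γ * γ) :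
    ∑ k, (γi * n k) ^ 2 = 1 := by
  simp_rw [mul_pow, ← mul_sum, hn]
  linear_combination (γ * γi + 1) * hγinv

theorem codazzi_mainardi_poisson_identity_general {A : Type*} [CommRing A] [Algebra ℝ A]
    (br : A → A → A)
    (hadd : ∀ a b c : A, br (a + b) c = br a c + br b c)
    (hskew : ∀ a b : A, br a b = -br b a)
    (hleibniz : ∀ a b c : A, br a (b * c) = br a b * c + b * br a c)
    (x : Fin 3 → A) (γ γi : A)
    (hγinv : γ * γi = 1)
    (hγsq : γ * γ =
      br (x 0) (x 1) ^ 2 + br (x 1) (x 2) ^ 2 + br (x 2) (x 0) ^ 2)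
    (i : Fin 3) :
    ∑ j : Fin 3, ∑ k : Fin 3, ∑ l : Fin 3, ∑ m : Fin 3,
      ((1 / 2 : ℝ) * leviCivita ![k, l, m]) •
        br (γi * γi * (br (x i) (x j) * br (x j) (x k)))
           (γi * br (x l) (x m)) = 0 := by
  have : IsAddTorsionFree A := .of_isTorsionFree ℝ A
  set n : Fin 3 → A := fun k => br (x (k + 1)) (x (k + 2))
  have hcontract (P : A) (k : Fin 3) :
      ∑ l, ∑ m, ((1 / 2 : ℝ) * leviCivita ![k, l, m]) • br P (γi * br (x l) (x m)) =
        br P (γi * n k) :=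
    sum_half_leviCivita_smul _ (fun l m => by
      rw [hskew (x m), mul_neg, bracket_neg_right hadd hskew]) k
  have hsq (k : Fin 3) :
      ∑ j, br (x i) (x j) * br (x j) (x k) = n i * n k - if i = k then ∑ p, n p ^ 2 else 0 :=
    sum_mul_eq_of_antisymm_fin_three (B := fun a b => br (x a) (x b))
      (fun _ => bracket_self hskew _) (fun _ _ => hskew _ _) i k
  have hnorm : ∑ p, n p ^ 2 = γ * γ := by
    rw [Fin.sum_univ_three, hγsq]
    simp only [n, Fin.reduceAdd]
    ring
  calc _ = ∑ k, br (γi * γi * ∑ j, br (x i) (x j) * br (x j) (x k)) (γi * n k) := by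
        simp_rw [hcontract]
        rw [sum_comm]
        simp_rw [mul_sum, bracket_sum_left hadd]
    _ = ∑ k, br (γi * n i * (γi * n k) - if i = k then 1 else 0) (γi * n k) := by
        refine sum_congr rfl fun k _ => ?_
        rw [hsq, hnorm]
        congr 1
        split_ifs
        · linear_combination (-(γ * γi) - 1) * hγinv
        · ring
    _ = 0 := sum_bracket_mul_sub_ite_eq_zero hadd hskew hleibniz
        (sum_sq_mul_eq_one_of_mul_eq_one hγinv hnorm) i

/-- For an arbitrary Poisson bracket on a commutative algebra `A` and elements
`x¹, x², x³ ∈ A`, with `γ² = {x¹,x²}² + {x²,x³}² + {x³,x¹}²` and `γ` invertible,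
the Poisson-algebraic Codazzi–Mainardi expression
`∑ (1/2) ε_{kln} {γ⁻²{xⁱ,xʲ}{xʲ,xᵏ}, γ⁻¹{xˡ,xⁿ}}` vanishes for each `i`. -/
theorem codazzi_mainardi_poisson_identity {A : Type*} [CommRing A] [Algebra ℝ A]
    (br : A → A → A)
    (hadd : ∀ a b c : A, br (a + b) c = br a c + br b c)
    (hsmul : ∀ (r : ℝ) (a b : A), br (r • a) b = r • br a b)
    (hskew : ∀ a b : A, br a b = -br b a)
    (hjacobi : ∀ a b c : A, br a (br b c) + br b (br c a) + br c (br a b) = 0)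
    (hleibniz : ∀ a b c : A, br a (b * c) = br a b * c + b * br a c)
    (x : Fin 3 → A) (γ γi : A)
    (hγinv : γ * γi = 1)
    (hγsq : γ * γ =
      br (x 0) (x 1) ^ 2 + br (x 1) (x 2) ^ 2 + br (x 2) (x 0) ^ 2)
    (i : Fin 3) :
    ∑ j : Fin 3, ∑ k : Fin 3, ∑ l : Fin 3, ∑ m : Fin 3,
      ((1 / 2 : ℝ) * leviCivita ![k, l, m]) •
        br (γi * γi * (br (x i) (x j) * br (x j) (x k)))
           (γi * br (x l) (x m)) = 0 :=
  codazzi_mainardi_poisson_identity_general br hadd hskew hleibniz x γ γi hγinv hγsq i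
end

section
/- Let Σ be an n-dimensional manifold embedded in a Riemannian manifold M of dimension m = n + p, with induced metric g and Nambu bracket {f_1,…,f_n} = ρ^{-1} ε^{a_1⋯a_n}(∂_{a_1}f_1)⋯(∂_{a_n}f_n). Then γ² := g/ρ² (where g = det(g_{ab})) satisfies γ² = (1/n!) ∑_{i,j,I,J} ḡ_{ij} {x^i, x^{i_1},…,x^{i_{n-1}}} ḡ_{IJ} {x^j, x^{j_1},…,x^{j_{n-1}}}, where ḡ_{IJ} = ḡ_{i_1 j_1}⋯ḡ_{i_{n-1} j_{n-1}} and I, J range over multi-indices of length n−1 in {1,…,m}. -/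
open scoped BigOperators

/-- Partial derivative `∂_a f` on the coordinate chart `Fin n → ℝ`. -/
noncomputable def pd {n : ℕ} (a : Fin n) (f : (Fin n → ℝ) → ℝ) (u : Fin n → ℝ) : ℝ :=
  fderiv ℝ f u (Pi.single a 1)

/-- The Nambu bracket `{f₁,…,f_n} = ρ⁻¹ ε^{a₁⋯a_n} (∂_{a₁}f₁)⋯(∂_{a_n}f_n)`. -/
noncomputable def nambu {n : ℕ} (ρ : (Fin n → ℝ) → ℝ)
    (F : Fin n → ((Fin n → ℝ) → ℝ)) (u : Fin n → ℝ) : ℝ :=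
  (ρ u)⁻¹ * ∑ σ : Fin n → Fin n, leviCivita σ * ∏ b, pd (σ b) (F b) u

/-- The induced metric `g_{ab} = ḡ_{ij} ∂_a xⁱ ∂_b xʲ` on a submanifold of
dimension `n+1`. -/
noncomputable def inducedMetric {n m : ℕ}
    (G : (Fin (n + 1) → ℝ) → Matrix (Fin m) (Fin m) ℝ)
    (x : Fin m → (Fin (n + 1) → ℝ) → ℝ) (u : Fin (n + 1) → ℝ) :
    Matrix (Fin (n + 1)) (Fin (n + 1)) ℝ :=
  Matrix.of fun a b => ∑ i, ∑ j, G u i j * pd a (x i) u * pd b (x j) u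

section Aux

noncomputable def sgn {N : ℕ} (e : Equiv.Perm (Fin N)) : ℝ := ((Equiv.Perm.sign e : ℤ) : ℝ)

lemma sgn_mul {N : ℕ} (e f : Equiv.Perm (Fin N)) : sgn (e * f) = sgn e * sgn f := by
  simp [sgn]

lemma sgn_sq {N : ℕ} (e : Equiv.Perm (Fin N)) : sgn e * sgn e = 1 := by
  unfold sgn
  rcases Int.units_eq_one_or (Equiv.Perm.sign e) with h | h <;> simp [h]

noncomputable def Tdet {N m : ℕ} (D : Fin m → Fin N → ℝ) (K : Fin N → Fin m) : ℝ :=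
  ∑ e : Equiv.Perm (Fin N), sgn e * ∏ b, D (K b) (e b)

lemma sum_leviCivita {N : ℕ} (P : (Fin N → Fin N) → ℝ) :
    ∑ σ : Fin N → Fin N, leviCivita σ * P σ = ∑ e : Equiv.Perm (Fin N), sgn e * P ⇑e := by
  classical
  rw [← Finset.sum_filter_of_ne (p := fun σ : Fin N → Fin N => Function.Bijective σ)
    (by intro σ _ h; by_contra hb; exact h (by rw [leviCivita, dif_neg hb, zero_mul]))]
  refine Finset.sum_bij
    (fun σ hσ => Equiv.ofBijective σ ((Finset.mem_filter.mp hσ).2)) ?_ ?_ ?_ ?_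
  · intro a ha; exact Finset.mem_univ _
  · intro a ha b hb h
    have := congrArg (fun e : Equiv.Perm (Fin N) => (e : Fin N → Fin N)) h
    exact this
  · intro e _
    refine ⟨⇑e, Finset.mem_filter.mpr ⟨Finset.mem_univ _, e.bijective⟩, ?_⟩
    ext z; rfl
  · intro σ hσ
    have hb : Function.Bijective σ := (Finset.mem_filter.mp hσ).2
    rw [leviCivita, dif_pos hb]
    rfl

/-- composition with a permutation as an equiv on tuples -/
def compPermEquiv {N m : ℕ} (e : Equiv.Perm (Fin N)) : (Fin N → Fin m) ≃ (Fin N → Fin m) where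
  toFun K := K ∘ e
  invFun K := K ∘ e.symm
  left_inv K := by funext a; simp
  right_inv K := by funext a; simp

lemma Tdet_comp {N m : ℕ} (D : Fin m → Fin N → ℝ) (K : Fin N → Fin m) (e : Equiv.Perm (Fin N)) :
    Tdet D (K ∘ e) = sgn e * Tdet D K := by
  unfold Tdet
  rw [Finset.mul_sum]
  rw [← Equiv.sum_comp (Equiv.mulRight e)
    (fun c : Equiv.Perm (Fin N) => sgn c * ∏ b, D ((K ∘ e) b) (c b))]
  refine Finset.sum_congr rfl fun c _ => ?_
  simp only [Equiv.coe_mulRight, Function.comp_apply, Equiv.Perm.mul_apply]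
  rw [sgn_mul]
  rw [← Equiv.prod_comp e (fun b => D (K b) (c b))]
  ring

lemma alt_contract {N m : ℕ} (D : Fin m → Fin N → ℝ) (S : (Fin N → Fin m) → ℝ)
    (hS : ∀ (e : Equiv.Perm (Fin N)) (K : Fin N → Fin m), S (K ∘ e) = sgn e * S K) :
    ∑ K : Fin N → Fin m, S K * Tdet D K
      = (Nat.factorial N : ℝ) * ∑ K : Fin N → Fin m, S K * ∏ a, D (K a) a := by
  have key : ∀ e : Equiv.Perm (Fin N),
      ∑ K : Fin N → Fin m, S K * (sgn e * ∏ a, D (K a) (e a))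
        = ∑ K : Fin N → Fin m, S K * ∏ a, D (K a) a := by
    intro e
    rw [← Equiv.sum_comp (compPermEquiv e)
      (fun K : Fin N → Fin m => S K * (sgn e * ∏ a, D (K a) (e a)))]
    refine Finset.sum_congr rfl fun K _ => ?_
    have h1 : (compPermEquiv e K : Fin N → Fin m) = K ∘ e := rfl
    rw [h1, hS e K]
    have h3 : ∏ a, D ((K ∘ e) a) (e a) = ∏ a, D (K a) a :=
      Equiv.prod_comp e (fun a => D (K a) a)
    rw [h3]
    linear_combination (S K * ∏ a, D (K a) a) * sgn_sq e
  calc ∑ K : Fin N → Fin m, S K * Tdet D K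
      = ∑ K : Fin N → Fin m, ∑ e : Equiv.Perm (Fin N), S K * (sgn e * ∏ a, D (K a) (e a)) := by
        refine Finset.sum_congr rfl fun K _ => ?_
        rw [Tdet, Finset.mul_sum]
    _ = ∑ e : Equiv.Perm (Fin N), ∑ K : Fin N → Fin m, S K * (sgn e * ∏ a, D (K a) (e a)) :=
        Finset.sum_comm
    _ = ∑ _e : Equiv.Perm (Fin N), ∑ K : Fin N → Fin m, S K * ∏ a, D (K a) a := by
        exact Finset.sum_congr rfl fun e _ => key e
    _ = (Nat.factorial N : ℝ) * ∑ K : Fin N → Fin m, S K * ∏ a, D (K a) a := by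
        rw [Finset.sum_const, Finset.card_univ, Fintype.card_perm, Fintype.card_fin,
          nsmul_eq_mul]

/-- pairing equiv -/
def pairFunEquiv {N m : ℕ} : ((Fin N → Fin m) × (Fin N → Fin m)) ≃ (Fin N → Fin m × Fin m) where
  toFun q := fun a => (q.1 a, q.2 a)
  invFun p := (fun a => (p a).1, fun a => (p a).2)
  left_inv q := by simp
  right_inv p := by funext a; simp

lemma main_det {N m : ℕ} (D : Fin m → Fin N → ℝ) (G : Matrix (Fin m) (Fin m) ℝ) :
    (Nat.factorial N : ℝ) *
        (Matrix.of fun a b => ∑ i, ∑ j, G i j * D i a * D j b : Matrix (Fin N) (Fin N) ℝ).det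
      = ∑ K : Fin N → Fin m, ∑ L : Fin N → Fin m,
          (∏ b, G (K b) (L b)) * (Tdet D K * Tdet D L) := by
  classical
  have hdet : (Matrix.of fun a b => ∑ i, ∑ j, G i j * D i a * D j b :
      Matrix (Fin N) (Fin N) ℝ).det
      = ∑ L : Fin N → Fin m, ∑ K : Fin N → Fin m,
          ((∏ b, G (K b) (L b)) * Tdet D K) * ∏ a, D (L a) a := by
    rw [Matrix.det_apply']
    have expand : ∀ e : Equiv.Perm (Fin N),
        (∏ a, (Matrix.of fun a b => ∑ i, ∑ j, G i j * D i a * D j b :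
          Matrix (Fin N) (Fin N) ℝ) (e a) a)
        = ∑ K : Fin N → Fin m, ∑ L : Fin N → Fin m,
            (∏ b, G (K b) (L b)) * (∏ a, D (K a) (e a)) * ∏ a, D (L a) a := by
      intro e
      have h1 : ∀ a : Fin N,
          (Matrix.of fun a b => ∑ i, ∑ j, G i j * D i a * D j b :
            Matrix (Fin N) (Fin N) ℝ) (e a) a
          = ∑ q : Fin m × Fin m, G q.1 q.2 * D q.1 (e a) * D q.2 a := by
        intro a
        rw [Matrix.of_apply]
        exact (Fintype.sum_prod_type
          (f := fun q : Fin m × Fin m => G q.1 q.2 * D q.1 (e a) * D q.2 a)).symm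
      calc (∏ a, (Matrix.of fun a b => ∑ i, ∑ j, G i j * D i a * D j b :
            Matrix (Fin N) (Fin N) ℝ) (e a) a)
          = ∏ a, ∑ q : Fin m × Fin m, G q.1 q.2 * D q.1 (e a) * D q.2 a := by
            exact Finset.prod_congr rfl fun a _ => h1 a
        _ = ∑ p : Fin N → Fin m × Fin m, ∏ a, G (p a).1 (p a).2 * D (p a).1 (e a) * D (p a).2 a :=
            Fintype.prod_sum _
        _ = ∑ q : (Fin N → Fin m) × (Fin N → Fin m),
              ∏ a, G (q.1 a) (q.2 a) * D (q.1 a) (e a) * D (q.2 a) a := by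
            exact (Equiv.sum_comp (pairFunEquiv (N := N) (m := m))
              (fun p => ∏ a, G (p a).1 (p a).2 * D (p a).1 (e a) * D (p a).2 a)).symm
        _ = ∑ K : Fin N → Fin m, ∑ L : Fin N → Fin m,
              (∏ b, G (K b) (L b)) * (∏ a, D (K a) (e a)) * ∏ a, D (L a) a := by
            rw [Fintype.sum_prod_type]
            refine Finset.sum_congr rfl fun K _ => Finset.sum_congr rfl fun L _ => ?_
            rw [← Finset.prod_mul_distrib, ← Finset.prod_mul_distrib]
    calc (∑ e : Equiv.Perm (Fin N), ((Equiv.Perm.sign e : ℤ) : ℝ) *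
            ∏ a, (Matrix.of fun a b => ∑ i, ∑ j, G i j * D i a * D j b :
              Matrix (Fin N) (Fin N) ℝ) (e a) a)
        = ∑ e : Equiv.Perm (Fin N), ∑ K : Fin N → Fin m, ∑ L : Fin N → Fin m,
            sgn e * ((∏ b, G (K b) (L b)) * (∏ a, D (K a) (e a)) * ∏ a, D (L a) a) := by
          refine Finset.sum_congr rfl fun e _ => ?_
          rw [expand e, Finset.mul_sum]
          exact Finset.sum_congr rfl fun K _ => by rw [Finset.mul_sum]; rfl
      _ = ∑ K : Fin N → Fin m, ∑ L : Fin N → Fin m, ∑ e : Equiv.Perm (Fin N),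
            sgn e * ((∏ b, G (K b) (L b)) * (∏ a, D (K a) (e a)) * ∏ a, D (L a) a) := by
          rw [Finset.sum_comm]
          exact Finset.sum_congr rfl fun K _ => Finset.sum_comm
      _ = ∑ K : Fin N → Fin m, ∑ L : Fin N → Fin m,
            ((∏ b, G (K b) (L b)) * Tdet D K) * ∏ a, D (L a) a := by
          refine Finset.sum_congr rfl fun K _ => Finset.sum_congr rfl fun L _ => ?_
          rw [Tdet, Finset.mul_sum, Finset.sum_mul]
          exact Finset.sum_congr rfl fun e _ => by ring
      _ = ∑ L : Fin N → Fin m, ∑ K : Fin N → Fin m,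
            ((∏ b, G (K b) (L b)) * Tdet D K) * ∏ a, D (L a) a := Finset.sum_comm
  set S : (Fin N → Fin m) → ℝ := fun L => ∑ K : Fin N → Fin m, (∏ b, G (K b) (L b)) * Tdet D K
    with hSdef
  have hS : ∀ (e : Equiv.Perm (Fin N)) (L : Fin N → Fin m), S (L ∘ e) = sgn e * S L := by
    intro e L
    rw [hSdef]
    simp only
    rw [← Equiv.sum_comp (compPermEquiv e)
      (fun K : Fin N → Fin m => (∏ b, G (K b) ((L ∘ e) b)) * Tdet D K)]
    rw [Finset.mul_sum]
    refine Finset.sum_congr rfl fun K _ => ?_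
    have h1 : (compPermEquiv e K : Fin N → Fin m) = K ∘ e := rfl
    rw [h1, Tdet_comp]
    have h2 : ∏ b, G ((K ∘ e) b) ((L ∘ e) b) = ∏ b, G (K b) (L b) :=
      Equiv.prod_comp e (fun b => G (K b) (L b))
    rw [h2]; ring
  have hcontr := alt_contract D S hS
  have hdet2 : (Matrix.of fun a b => ∑ i, ∑ j, G i j * D i a * D j b :
      Matrix (Fin N) (Fin N) ℝ).det = ∑ L : Fin N → Fin m, S L * ∏ a, D (L a) a := by
    rw [hdet]
    exact Finset.sum_congr rfl fun L _ => (Finset.sum_mul _ _ _).symm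
  rw [hdet2, ← hcontr]
  rw [Finset.sum_comm]
  refine Finset.sum_congr rfl fun K _ => ?_
  rw [hSdef]
  simp only
  rw [Finset.sum_mul]
  exact Finset.sum_congr rfl fun L _ => by ring

def consEquivFin {n m : ℕ} : (Fin m × (Fin n → Fin m)) ≃ (Fin (n + 1) → Fin m) where
  toFun p := Fin.cons p.1 p.2
  invFun K := (K 0, fun a => K a.succ)
  left_inv p := by simp
  right_inv K := by
    funext b
    refine Fin.cases ?_ ?_ b <;> simp

end Aux

/-- `γ² = det(g)/ρ²` equals
`(1/n!) ∑ ḡ_{ij} {xⁱ, x^I} ḡ_{IJ} {xʲ, x^J}` (submanifold of dimension `n+1`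
in an `m`-dimensional Riemannian manifold, multi-indices of length `n`). -/
theorem gammaSq_eq_nambu_sum {n m : ℕ}
    (ρ : (Fin (n + 1) → ℝ) → ℝ)
    (x : Fin m → (Fin (n + 1) → ℝ) → ℝ)
    (G : (Fin (n + 1) → ℝ) → Matrix (Fin m) (Fin m) ℝ)
    (hρ : ∀ u, ρ u ≠ 0)
    (hx : ∀ i, ContDiff ℝ (⊤ : ℕ∞) (x i))
    (hG : ∀ u, (G u).IsSymm)
    (u : Fin (n + 1) → ℝ) :
    (inducedMetric G x u).det / (ρ u) ^ 2 =
      (1 / (Nat.factorial (n + 1) : ℝ)) *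
        ∑ i : Fin m, ∑ j : Fin m,
          ∑ I : Fin n → Fin m, ∑ J : Fin n → Fin m,
            G u i j * nambu ρ (fun b => x ((Fin.cons i I : Fin (n + 1) → Fin m) b)) u *
              (∏ a, G u (I a) (J a)) * nambu ρ (fun b => x ((Fin.cons j J : Fin (n + 1) → Fin m) b)) u := by
  classical
  set D : Fin m → Fin (n + 1) → ℝ := fun i a => pd a (x i) u with hD
  have hnb : ∀ K : Fin (n + 1) → Fin m,
      nambu ρ (fun b => x (K b)) u = (ρ u)⁻¹ * Tdet D K := by
    intro K
    rw [nambu, sum_leviCivita (fun σ => ∏ b, pd (σ b) (x (K b)) u)]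
    rfl
  have cons_sum : ∀ f : (Fin (n + 1) → Fin m) → ℝ,
      (∑ i : Fin m, ∑ I : Fin n → Fin m, f (Fin.cons i I)) = ∑ K : Fin (n + 1) → Fin m, f K := by
    intro f
    exact ((Fintype.sum_prod_type
      (f := fun p : Fin m × (Fin n → Fin m) => f (Fin.cons p.1 p.2))).symm).trans
      (Equiv.sum_comp (consEquivFin (n := n) (m := m)) f)
  have prodcons : ∀ (i j : Fin m) (I J : Fin n → Fin m),
      (∏ b, G u ((Fin.cons i I : Fin (n + 1) → Fin m) b) ((Fin.cons j J : Fin (n + 1) → Fin m) b))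
        = G u i j * ∏ a, G u (I a) (J a) := by
    intro i j I J
    rw [Fin.prod_univ_succ]
    simp
  have h1 : ∀ (i j : Fin m) (I J : Fin n → Fin m),
      G u i j * nambu ρ (fun b => x ((Fin.cons i I : Fin (n + 1) → Fin m) b)) u *
          (∏ a, G u (I a) (J a)) * nambu ρ (fun b => x ((Fin.cons j J : Fin (n + 1) → Fin m) b)) u
        = (ρ u)⁻¹ * (ρ u)⁻¹ *
            ((∏ b, G u ((Fin.cons i I : Fin (n + 1) → Fin m) b)
                ((Fin.cons j J : Fin (n + 1) → Fin m) b)) *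
              (Tdet D (Fin.cons i I) * Tdet D (Fin.cons j J))) := by
    intro i j I J
    rw [hnb, hnb, prodcons]
    ring
  have h2 : (∑ i : Fin m, ∑ j : Fin m,
          ∑ I : Fin n → Fin m, ∑ J : Fin n → Fin m,
            G u i j * nambu ρ (fun b => x ((Fin.cons i I : Fin (n + 1) → Fin m) b)) u *
              (∏ a, G u (I a) (J a)) *
                nambu ρ (fun b => x ((Fin.cons j J : Fin (n + 1) → Fin m) b)) u)
      = (ρ u)⁻¹ * (ρ u)⁻¹ *
          ∑ K : Fin (n + 1) → Fin m, ∑ L : Fin (n + 1) → Fin m,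
            (∏ b, G u (K b) (L b)) * (Tdet D K * Tdet D L) := by
    calc (∑ i : Fin m, ∑ j : Fin m, ∑ I : Fin n → Fin m, ∑ J : Fin n → Fin m,
            G u i j * nambu ρ (fun b => x ((Fin.cons i I : Fin (n + 1) → Fin m) b)) u *
              (∏ a, G u (I a) (J a)) *
                nambu ρ (fun b => x ((Fin.cons j J : Fin (n + 1) → Fin m) b)) u)
        = ∑ i : Fin m, ∑ j : Fin m, ∑ I : Fin n → Fin m, ∑ J : Fin n → Fin m,
            (ρ u)⁻¹ * (ρ u)⁻¹ *
              ((∏ b, G u ((Fin.cons i I : Fin (n + 1) → Fin m) b)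
                  ((Fin.cons j J : Fin (n + 1) → Fin m) b)) *
                (Tdet D (Fin.cons i I) * Tdet D (Fin.cons j J))) := by
          exact Finset.sum_congr rfl fun i _ => Finset.sum_congr rfl fun j _ =>
            Finset.sum_congr rfl fun I _ => Finset.sum_congr rfl fun J _ => h1 i j I J
      _ = ∑ i : Fin m, ∑ I : Fin n → Fin m, ∑ j : Fin m, ∑ J : Fin n → Fin m,
            (ρ u)⁻¹ * (ρ u)⁻¹ *
              ((∏ b, G u ((Fin.cons i I : Fin (n + 1) → Fin m) b)
                  ((Fin.cons j J : Fin (n + 1) → Fin m) b)) *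
                (Tdet D (Fin.cons i I) * Tdet D (Fin.cons j J))) := by
          exact Finset.sum_congr rfl fun i _ => Finset.sum_comm
      _ = ∑ K : Fin (n + 1) → Fin m, ∑ j : Fin m, ∑ J : Fin n → Fin m,
            (ρ u)⁻¹ * (ρ u)⁻¹ *
              ((∏ b, G u (K b) ((Fin.cons j J : Fin (n + 1) → Fin m) b)) *
                (Tdet D K * Tdet D (Fin.cons j J))) := by
          exact cons_sum (fun K => ∑ j : Fin m, ∑ J : Fin n → Fin m,
            (ρ u)⁻¹ * (ρ u)⁻¹ *
              ((∏ b, G u (K b) ((Fin.cons j J : Fin (n + 1) → Fin m) b)) *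
                (Tdet D K * Tdet D (Fin.cons j J))))
      _ = ∑ K : Fin (n + 1) → Fin m, ∑ L : Fin (n + 1) → Fin m,
            (ρ u)⁻¹ * (ρ u)⁻¹ *
              ((∏ b, G u (K b) (L b)) * (Tdet D K * Tdet D L)) := by
          refine Finset.sum_congr rfl fun K _ => ?_
          exact cons_sum (fun L => (ρ u)⁻¹ * (ρ u)⁻¹ *
            ((∏ b, G u (K b) (L b)) * (Tdet D K * Tdet D L)))
      _ = (ρ u)⁻¹ * (ρ u)⁻¹ *
            ∑ K : Fin (n + 1) → Fin m, ∑ L : Fin (n + 1) → Fin m,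
              (∏ b, G u (K b) (L b)) * (Tdet D K * Tdet D L) := by
          rw [Finset.mul_sum]
          exact Finset.sum_congr rfl fun K _ => by rw [Finset.mul_sum]
  rw [h2]
  have key := main_det (N := n + 1) D (G u)
  have hind : inducedMetric G x u
      = (Matrix.of fun a b => ∑ i, ∑ j, G u i j * D i a * D j b :
          Matrix (Fin (n + 1)) (Fin (n + 1)) ℝ) := rfl
  rw [hind, ← key]
  have hN : (Nat.factorial (n + 1) : ℝ) ≠ 0 := Nat.cast_ne_zero.mpr (Nat.factorial_ne_zero _)
  have hr : ρ u ≠ 0 := hρ u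
  field_simp
end

section
/- In the setting of an n-dimensional submanifold Σ ⊂ M with codimension p, the vectors Z_α = (1/(γ n! √((p−1)!))) ḡ^{ij} ε_{j k_1⋯k_n α} {x^{k_1},…,x^{k_n}} ∂_i (α a multi-index of length p−1) are normal to TΣ, i.e. ḡ(Z_α, e_a) = 0 for all a = 1,…,n; and for a hypersurface (p = 1), Z has unit length: ḡ(Z,Z) = 1. -/
open scoped BigOperators

/-- The candidate normal vectors
`Z_α = (1/(γ n! √((p−1)!))) ḡ^{ij} ε_{j k₁⋯k_n α} {x^{k₁},…,x^{k_n}} ∂_i`,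
for a submanifold `Σ` of dimension `n+1` and codimension `q+1`, where `α` is a
multi-index of length `q` and `ε` is the Levi-Civita tensor of `(M, ḡ)`. -/
noncomputable def Zvec {n q : ℕ}
    (ρ : (Fin (n + 1) → ℝ) → ℝ)
    (x : Fin (n + 1 + q + 1) → (Fin (n + 1) → ℝ) → ℝ)
    (G : (Fin (n + 1) → ℝ) → Matrix (Fin (n + 1 + q + 1)) (Fin (n + 1 + q + 1)) ℝ)
    (u : Fin (n + 1) → ℝ) (α : Fin q → Fin (n + 1 + q + 1))
    (i : Fin (n + 1 + q + 1)) : ℝ :=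
  ((Real.sqrt (inducedMetric G x u).det / ρ u) *
      (Nat.factorial (n + 1) : ℝ) * Real.sqrt (Nat.factorial q : ℝ))⁻¹ *
    ∑ j, (G u)⁻¹ i j *
      ∑ K : Fin (n + 1) → Fin (n + 1 + q + 1),
        Real.sqrt (G u).det *
          leviCivita (Fin.cons j (Fin.append K α) : Fin (n + 1 + q + 1) → Fin (n + 1 + q + 1)) *
          nambu ρ (fun b => x (K b)) u

/-! ### Auxiliary lemmas -/

section Aux

open Equiv Function

lemma leviCivita_eq_zero {N : ℕ} {f : Fin N → Fin N} (h : ¬ Function.Injective f) :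
    leviCivita f = 0 := by
  rw [leviCivita, dif_neg]; exact fun hb => h hb.injective

lemma leviCivita_comp_perm {N : ℕ} (f : Fin N → Fin N) (e : Equiv.Perm (Fin N)) :
    leviCivita (f ∘ e) = ((Equiv.Perm.sign e : ℤ) : ℝ) * leviCivita f := by
  by_cases hb : Function.Bijective f
  · have hb' : Function.Bijective (f ∘ e) := hb.comp e.bijective
    rw [leviCivita, leviCivita, dif_pos hb, dif_pos hb']
    have : Equiv.ofBijective (f ∘ e) hb' = (Equiv.ofBijective f hb) * e := Equiv.ext fun x => rfl
    rw [this, map_mul]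
    push_cast; ring
  · have hb' : ¬ Function.Bijective (f ∘ e) := by
      intro h
      have : f = (f ∘ e) ∘ e.symm := by funext t; simp
      exact hb (this ▸ h.comp e.symm.bijective)
    rw [leviCivita, leviCivita, dif_neg hb, dif_neg hb', mul_zero]

lemma sum_levi {N : ℕ} (P : (Fin N → Fin N) → ℝ) :
    ∑ f : Fin N → Fin N, leviCivita f * P f
      = ∑ e : Equiv.Perm (Fin N), ((Equiv.Perm.sign e : ℤ) : ℝ) * P ⇑e := by
  classical
  have h1 : ∑ f ∈ Finset.univ.filter (fun f => Function.Bijective f),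
      leviCivita f * P f = ∑ f : Fin N → Fin N, leviCivita f * P f := by
    refine Finset.sum_filter_of_ne ?_
    intro f _ hf; by_contra hb; rw [leviCivita, dif_neg hb, zero_mul] at hf; exact hf rfl
  rw [← h1]
  refine Finset.sum_nbij'
    (fun f => if h : Function.Bijective f then Equiv.ofBijective f h else (1 : Equiv.Perm (Fin N)))
    (fun e => ⇑e) ?_ ?_ ?_ ?_ ?_
  · intro f hf; simp
  · intro e _; exact Finset.mem_filter.2 ⟨Finset.mem_univ _, e.bijective⟩
  · intro f hf
    simp only [Finset.mem_filter] at hf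
    simp only [dif_pos hf.2]; rfl
  · intro e _
    simp only [dif_pos e.bijective]
    exact Equiv.ext fun x => rfl
  · intro f hf
    simp only [Finset.mem_filter] at hf
    simp only [dif_pos hf.2]
    rw [leviCivita, dif_pos hf.2]
    rfl

lemma levi_det {N : ℕ} (M : Matrix (Fin N) (Fin N) ℝ) :
    ∑ f : Fin N → Fin N, leviCivita f * ∏ t, M (f t) t = M.det := by
  rw [sum_levi, Matrix.det_apply]
  refine Finset.sum_congr rfl fun e _ => ?_
  rw [Units.smul_def, zsmul_eq_mul]

lemma cons_swap {n q : ℕ} (j : Fin (n+1+q+1)) (K : Fin (n+1) → Fin (n+1+q+1))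
    (α : Fin q → Fin (n+1+q+1)) (b0 : Fin (n+1)) :
    (Fin.cons (K b0) (Fin.append (Function.update K b0 j) α) : Fin (n+1+q+1) → Fin (n+1+q+1))
      = (Fin.cons j (Fin.append K α) : Fin (n+1+q+1) → Fin (n+1+q+1))
        ∘ (Equiv.swap 0 (Fin.succ (Fin.castAdd q b0))) := by
  funext t
  induction t using Fin.cases with
  | zero => simp [Equiv.swap_apply_left, Fin.append_left]
  | succ s =>
    by_cases hs : s = Fin.castAdd q b0
    · subst hs
      simp only [Function.comp_apply, Equiv.swap_apply_right, Fin.cons_succ, Fin.cons_zero]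
      rw [Fin.append_left, Function.update_self]
    · have h1 : (Fin.succ s : Fin (n+1+q+1)) ≠ 0 := Fin.succ_ne_zero s
      have h2 : (Fin.succ s : Fin (n+1+q+1)) ≠ Fin.succ (Fin.castAdd q b0) := by
        simpa [Fin.succ_inj] using hs
      simp only [Function.comp_apply, Equiv.swap_apply_of_ne_of_ne h1 h2, Fin.cons_succ]
      induction s using Fin.addCases with
      | left b =>
        have hb : b ≠ b0 := by rintro rfl; exact hs rfl
        rw [Fin.append_left, Fin.append_left, Function.update_of_ne hb]
      | right c =>
        rw [Fin.append_right, Fin.append_right]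

lemma pair_zero {n q : ℕ} (x : Fin (n+1+q+1) → (Fin (n+1) → ℝ) → ℝ) (u : Fin (n+1) → ℝ)
    (α : Fin q → Fin (n+1+q+1)) (a : Fin (n+1)) (σ : Fin (n+1) → Fin (n+1))
    (hσ : Function.Bijective σ) :
    ∑ p : Fin (n+1+q+1) × (Fin (n+1) → Fin (n+1+q+1)),
      leviCivita (Fin.cons p.1 (Fin.append p.2 α)) * pd a (x p.1) u
        * ∏ b, pd (σ b) (x (p.2 b)) u = 0 := by
  classical
  obtain ⟨b0, hb0⟩ := hσ.surjective a
  refine Finset.sum_involution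
    (fun p _ => (p.2 b0, Function.update p.2 b0 p.1)) ?_ ?_ (fun _ _ => Finset.mem_univ _) ?_
  · rintro ⟨j, K⟩ _
    simp only
    by_cases hjk : K b0 = j
    · have hz : leviCivita (Fin.cons j (Fin.append K α) : Fin (n+1+q+1) → Fin (n+1+q+1)) = 0 := by
        refine leviCivita_eq_zero ?_
        intro hinj
        have : (0 : Fin (n+1+q+1)) = Fin.succ (Fin.castAdd q b0) := by
          apply hinj
          simp [Fin.append_left, hjk]
        exact (Fin.succ_ne_zero _) this.symm
      have hz2 : leviCivita (Fin.cons (K b0) (Fin.append (Function.update K b0 j) α)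
          : Fin (n+1+q+1) → Fin (n+1+q+1)) = 0 := by
        rw [cons_swap, leviCivita_comp_perm, hz, mul_zero]
      rw [hz, hz2]; ring
    · have hlevi : leviCivita (Fin.cons (K b0) (Fin.append (Function.update K b0 j) α)
          : Fin (n+1+q+1) → Fin (n+1+q+1))
          = - leviCivita (Fin.cons j (Fin.append K α) : Fin (n+1+q+1) → Fin (n+1+q+1)) := by
        rw [cons_swap, leviCivita_comp_perm]
        rw [Equiv.Perm.sign_swap (by exact (Fin.succ_ne_zero _).symm)]
        push_cast; ring
      have hprod : ∏ b, pd (σ b) (x (Function.update K b0 j b)) u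
          = pd (σ b0) (x j) u * ∏ b ∈ Finset.univ \ {b0}, pd (σ b) (x (K b)) u := by
        have : (fun b => pd (σ b) (x (Function.update K b0 j b)) u)
            = Function.update (fun b => pd (σ b) (x (K b)) u) b0 (pd (σ b0) (x j) u) := by
          funext b
          by_cases hb : b = b0
          · subst hb; simp
          · rw [Function.update_of_ne hb, Function.update_of_ne hb]
        rw [this, Finset.prod_update_of_mem (Finset.mem_univ _)]
      have hprod0 : ∏ b, pd (σ b) (x (K b)) u
          = pd (σ b0) (x (K b0)) u * ∏ b ∈ Finset.univ \ {b0}, pd (σ b) (x (K b)) u :=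
        Finset.prod_eq_mul_prod_sdiff_singleton_of_mem (Finset.mem_univ b0) _
      rw [hlevi, hprod, hprod0, hb0]
      ring
  · rintro ⟨j, K⟩ _ hne
    intro hjk
    have hk : K b0 = j := congrArg Prod.fst hjk
    exfalso
    apply hne
    have hz : leviCivita (Fin.cons j (Fin.append K α) : Fin (n+1+q+1) → Fin (n+1+q+1)) = 0 := by
      refine leviCivita_eq_zero ?_
      intro hinj
      have : (0 : Fin (n+1+q+1)) = Fin.succ (Fin.castAdd q b0) := by
        apply hinj
        simp [Fin.append_left, hk]
      exact (Fin.succ_ne_zero _) this.symm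
    rw [hz]; ring
  · rintro ⟨j, K⟩ _
    simp [Function.update_idem]

/-- The un-normalized components `S_j`. -/
noncomputable def Svec {n q : ℕ}
    (ρ : (Fin (n + 1) → ℝ) → ℝ)
    (x : Fin (n + 1 + q + 1) → (Fin (n + 1) → ℝ) → ℝ)
    (G : (Fin (n + 1) → ℝ) → Matrix (Fin (n + 1 + q + 1)) (Fin (n + 1 + q + 1)) ℝ)
    (u : Fin (n + 1) → ℝ) (α : Fin q → Fin (n + 1 + q + 1))
    (j : Fin (n + 1 + q + 1)) : ℝ :=
  ∑ K : Fin (n + 1) → Fin (n + 1 + q + 1),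
    Real.sqrt (G u).det *
      leviCivita (Fin.cons j (Fin.append K α) : Fin (n + 1 + q + 1) → Fin (n + 1 + q + 1)) *
      nambu ρ (fun b => x (K b)) u

/-- The normalization constant. -/
noncomputable def cZ {n q : ℕ}
    (ρ : (Fin (n + 1) → ℝ) → ℝ)
    (x : Fin (n + 1 + q + 1) → (Fin (n + 1) → ℝ) → ℝ)
    (G : (Fin (n + 1) → ℝ) → Matrix (Fin (n + 1 + q + 1)) (Fin (n + 1 + q + 1)) ℝ)
    (u : Fin (n + 1) → ℝ) : ℝ :=
  ((Real.sqrt (inducedMetric G x u).det / ρ u) *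
      (Nat.factorial (n + 1) : ℝ) * Real.sqrt (Nat.factorial q : ℝ))⁻¹

lemma Zvec_eq {n q : ℕ}
    (ρ : (Fin (n + 1) → ℝ) → ℝ)
    (x : Fin (n + 1 + q + 1) → (Fin (n + 1) → ℝ) → ℝ)
    (G : (Fin (n + 1) → ℝ) → Matrix (Fin (n + 1 + q + 1)) (Fin (n + 1 + q + 1)) ℝ)
    (u : Fin (n + 1) → ℝ) (α : Fin q → Fin (n + 1 + q + 1)) (i : Fin (n + 1 + q + 1)) :
    Zvec ρ x G u α i = cZ ρ x G u * ∑ j, (G u)⁻¹ i j * Svec ρ x G u α j := rfl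

lemma contraction {n q : ℕ}
    (ρ : (Fin (n + 1) → ℝ) → ℝ)
    (x : Fin (n + 1 + q + 1) → (Fin (n + 1) → ℝ) → ℝ)
    (G : (Fin (n + 1) → ℝ) → Matrix (Fin (n + 1 + q + 1)) (Fin (n + 1 + q + 1)) ℝ)
    (u : Fin (n + 1) → ℝ) (α : Fin q → Fin (n + 1 + q + 1))
    (hGu : (G u).PosDef) (v : Fin (n + 1 + q + 1) → ℝ) :
    ∑ i, ∑ j, G u i j * Zvec ρ x G u α i * v j
      = cZ ρ x G u * ∑ j, Svec ρ x G u α j * v j := by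
  classical
  have hdet : IsUnit (G u).det := isUnit_iff_ne_zero.2 (ne_of_gt hGu.det_pos)
  have hsym : (G u).transpose = G u := by
    ext i j
    have := congrFun (congrFun hGu.isHermitian i) j
    simpa [Matrix.conjTranspose_apply] using this
  have key : ∀ j, ∑ i, G u i j * Zvec ρ x G u α i = cZ ρ x G u * Svec ρ x G u α j := by
    intro j
    calc ∑ i, G u i j * Zvec ρ x G u α i
        = ∑ i, ∑ k, G u i j * (cZ ρ x G u * ((G u)⁻¹ i k * Svec ρ x G u α k)) := by
          refine Finset.sum_congr rfl fun i _ => ?_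
          rw [Zvec_eq, Finset.mul_sum, Finset.mul_sum]
      _ = ∑ k, ∑ i, G u i j * (cZ ρ x G u * ((G u)⁻¹ i k * Svec ρ x G u α k)) :=
          Finset.sum_comm
      _ = ∑ k, cZ ρ x G u * Svec ρ x G u α k * ∑ i, G u i j * (G u)⁻¹ i k := by
          refine Finset.sum_congr rfl fun k _ => ?_
          rw [Finset.mul_sum]
          refine Finset.sum_congr rfl fun i _ => by ring
      _ = ∑ k, cZ ρ x G u * Svec ρ x G u α k * (if j = k then 1 else 0) := by
          refine Finset.sum_congr rfl fun k _ => ?_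
          congr 1
          have : ∑ i, G u i j * (G u)⁻¹ i k = ((G u).transpose * (G u)⁻¹) j k := by
            rw [Matrix.mul_apply]
            refine Finset.sum_congr rfl fun i _ => rfl
          rw [this, hsym, Matrix.mul_nonsing_inv _ hdet, Matrix.one_apply]
      _ = cZ ρ x G u * Svec ρ x G u α j := by
          simp [mul_ite, mul_one, mul_zero, Finset.sum_ite_eq]
  calc ∑ i, ∑ j, G u i j * Zvec ρ x G u α i * v j
      = ∑ j, (∑ i, G u i j * Zvec ρ x G u α i) * v j := by
        rw [Finset.sum_comm]
        refine Finset.sum_congr rfl fun j _ => by rw [Finset.sum_mul]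
    _ = cZ ρ x G u * ∑ j, Svec ρ x G u α j * v j := by
        rw [Finset.mul_sum]
        refine Finset.sum_congr rfl fun j _ => by rw [key j]; ring

lemma Svec_contract_zero {n q : ℕ}
    (ρ : (Fin (n + 1) → ℝ) → ℝ)
    (x : Fin (n + 1 + q + 1) → (Fin (n + 1) → ℝ) → ℝ)
    (G : (Fin (n + 1) → ℝ) → Matrix (Fin (n + 1 + q + 1)) (Fin (n + 1 + q + 1)) ℝ)
    (u : Fin (n + 1) → ℝ) (α : Fin q → Fin (n + 1 + q + 1)) (a : Fin (n + 1)) :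
    ∑ j, Svec ρ x G u α j * pd a (x j) u = 0 := by
  classical
  calc ∑ j, Svec ρ x G u α j * pd a (x j) u
      = ∑ p : Fin (n+1+q+1) × (Fin (n+1) → Fin (n+1+q+1)),
          (Real.sqrt (G u).det * leviCivita
              (Fin.cons p.1 (Fin.append p.2 α) : Fin (n+1+q+1) → Fin (n+1+q+1)) *
            nambu ρ (fun b => x (p.2 b)) u) * pd a (x p.1) u := by
        rw [Fintype.sum_prod_type]
        refine Finset.sum_congr rfl fun j _ => ?_
        rw [Svec, Finset.sum_mul]
    _ = ∑ p : Fin (n+1+q+1) × (Fin (n+1) → Fin (n+1+q+1)),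
          ∑ σ : Fin (n+1) → Fin (n+1),
            (Real.sqrt (G u).det * (ρ u)⁻¹ * leviCivita σ) *
              (leviCivita (Fin.cons p.1 (Fin.append p.2 α)) * pd a (x p.1) u
                * ∏ b, pd (σ b) (x (p.2 b)) u) := by
        refine Finset.sum_congr rfl fun p _ => ?_
        rw [nambu, Finset.mul_sum, Finset.mul_sum, Finset.sum_mul]
        exact Finset.sum_congr rfl fun σ _ => by ring
    _ = ∑ σ : Fin (n+1) → Fin (n+1),
          (Real.sqrt (G u).det * (ρ u)⁻¹ * leviCivita σ) *
          ∑ p : Fin (n+1+q+1) × (Fin (n+1) → Fin (n+1+q+1)),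
            leviCivita (Fin.cons p.1 (Fin.append p.2 α)) * pd a (x p.1) u
              * ∏ b, pd (σ b) (x (p.2 b)) u := by
        rw [Finset.sum_comm]
        exact Finset.sum_congr rfl fun σ _ => (Finset.mul_sum _ _ _).symm
    _ = 0 := by
        refine Finset.sum_eq_zero fun σ _ => ?_
        by_cases hσ : Function.Bijective σ
        · rw [pair_zero x u α a σ hσ, mul_zero]
        · rw [leviCivita_eq_zero (fun h => hσ (h.bijective_of_finite)), mul_zero, zero_mul]

lemma sum_cons {N : ℕ} {X : Type*} [Fintype X] (F : (Fin (N+1) → X) → ℝ) :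
    ∑ f : Fin (N+1) → X, F f = ∑ j : X, ∑ K : Fin N → X, F (Fin.cons j K) := by
  rw [← Equiv.sum_comp (Fin.consEquiv fun _ => X) F, Fintype.sum_prod_type]
  rfl

lemma levi_cons_comp {N : ℕ} (j : Fin (N+1)) (K : Fin N → Fin (N+1)) (e : Equiv.Perm (Fin N)) :
    leviCivita (Fin.cons j (K ∘ e) : Fin (N+1) → Fin (N+1))
      = ((Equiv.Perm.sign e : ℤ) : ℝ) * leviCivita (Fin.cons j K : Fin (N+1) → Fin (N+1)) := by
  have hE : (Fin.cons j (K ∘ e) : Fin (N+1) → Fin (N+1))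
      = (Fin.cons j K : Fin (N+1) → Fin (N+1)) ∘ (Equiv.Perm.decomposeFin.symm (0, e)) := by
    funext t
    induction t using Fin.cases with
    | zero => simp
    | succ s => simp
  rw [hE, leviCivita_comp_perm]
  congr 2
  rw [Equiv.Perm.decomposeFin.symm_sign]
  simp

lemma det_cons_col {N : ℕ} (v : Fin (N+1) → ℝ) (E : Fin N → Fin (N+1) → ℝ) :
    (Matrix.of fun i t => (Fin.cons v E : Fin (N+1) → Fin (N+1) → ℝ) t i).det
      = ∑ j, v j * ∑ K : Fin N → Fin (N+1),
          leviCivita (Fin.cons j K : Fin (N+1) → Fin (N+1)) * ∏ b, E b (K b) := by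
  rw [← levi_det, sum_cons]
  refine Finset.sum_congr rfl fun j _ => ?_
  rw [Finset.mul_sum]
  refine Finset.sum_congr rfl fun K _ => ?_
  have : ∀ t, (Matrix.of fun i t => (Fin.cons v E : Fin (N+1) → Fin (N+1) → ℝ) t i)
      ((Fin.cons j K : Fin (N+1) → Fin (N+1)) t) t
      = (Fin.cons v E : Fin (N+1) → Fin (N+1) → ℝ) t ((Fin.cons j K : Fin (N+1) → Fin (N+1)) t) :=
    fun t => rfl
  rw [Finset.prod_congr rfl fun t _ => this t]
  rw [Fin.prod_univ_succ]
  simp only [Fin.cons_zero, Fin.cons_succ]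
  ring

lemma nambu_collapse {n : ℕ} (ρ : (Fin (n+1) → ℝ) → ℝ) (x : Fin (n+2) → (Fin (n+1) → ℝ) → ℝ)
    (u : Fin (n+1) → ℝ) (j : Fin (n+2)) :
    ∑ K : Fin (n+1) → Fin (n+2),
        leviCivita (Fin.cons j K : Fin (n+2) → Fin (n+2)) * nambu ρ (fun b => x (K b)) u
      = (ρ u)⁻¹ * (Nat.factorial (n+1) : ℝ) *
        ∑ K : Fin (n+1) → Fin (n+2),
          leviCivita (Fin.cons j K : Fin (n+2) → Fin (n+2)) * ∏ b, pd b (x (K b)) u := by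
  have step1 : ∑ K : Fin (n+1) → Fin (n+2),
      leviCivita (Fin.cons j K : Fin (n+2) → Fin (n+2)) * nambu ρ (fun b => x (K b)) u
      = ∑ σ : Fin (n+1) → Fin (n+1), leviCivita σ *
          ∑ K : Fin (n+1) → Fin (n+2), (ρ u)⁻¹ *
            leviCivita (Fin.cons j K : Fin (n+2) → Fin (n+2)) * ∏ b, pd (σ b) (x (K b)) u := by
    calc ∑ K : Fin (n+1) → Fin (n+2),
        leviCivita (Fin.cons j K : Fin (n+2) → Fin (n+2)) * nambu ρ (fun b => x (K b)) u
        = ∑ K : Fin (n+1) → Fin (n+2), ∑ σ : Fin (n+1) → Fin (n+1),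
            leviCivita σ * ((ρ u)⁻¹ *
              leviCivita (Fin.cons j K : Fin (n+2) → Fin (n+2)) * ∏ b, pd (σ b) (x (K b)) u) := by
          refine Finset.sum_congr rfl fun K _ => ?_
          rw [nambu, Finset.mul_sum, Finset.mul_sum]
          exact Finset.sum_congr rfl fun σ _ => by ring
      _ = _ := by
          rw [Finset.sum_comm]
          refine Finset.sum_congr rfl fun σ _ => ?_
          rw [Finset.mul_sum]
  rw [step1, sum_levi]
  have step2 : ∀ e : Equiv.Perm (Fin (n+1)),
      ∑ K : Fin (n+1) → Fin (n+2), (ρ u)⁻¹ *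
          leviCivita (Fin.cons j K : Fin (n+2) → Fin (n+2)) * ∏ b, pd (⇑e b) (x (K b)) u
      = ((Equiv.Perm.sign e : ℤ) : ℝ) * ((ρ u)⁻¹ *
          ∑ K : Fin (n+1) → Fin (n+2),
            leviCivita (Fin.cons j K : Fin (n+2) → Fin (n+2)) * ∏ b, pd b (x (K b)) u) := by
    intro e
    have hre : ∀ K : Fin (n+1) → Fin (n+2),
        (ρ u)⁻¹ * leviCivita (Fin.cons j (K ∘ ⇑e) : Fin (n+2) → Fin (n+2))
          * ∏ b, pd (⇑e b) (x ((K ∘ ⇑e) b)) u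
        = ((Equiv.Perm.sign e : ℤ) : ℝ) * ((ρ u)⁻¹ *
            (leviCivita (Fin.cons j K : Fin (n+2) → Fin (n+2)) * ∏ b, pd b (x (K b)) u)) := by
      intro K
      rw [levi_cons_comp]
      have : ∏ b, pd (⇑e b) (x ((K ∘ ⇑e) b)) u = ∏ b, pd b (x (K b)) u :=
        Equiv.prod_comp e (fun c => pd c (x (K c)) u)
      rw [this]; ring
    calc ∑ K : Fin (n+1) → Fin (n+2), (ρ u)⁻¹ *
          leviCivita (Fin.cons j K : Fin (n+2) → Fin (n+2)) * ∏ b, pd (⇑e b) (x (K b)) u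
        = ∑ K : Fin (n+1) → Fin (n+2), (ρ u)⁻¹ *
            leviCivita (Fin.cons j (K ∘ ⇑e) : Fin (n+2) → Fin (n+2))
              * ∏ b, pd (⇑e b) (x ((K ∘ ⇑e) b)) u := by
          exact (Equiv.sum_comp (Equiv.arrowCongr e.symm (Equiv.refl (Fin (n+2))))
            (fun K => (ρ u)⁻¹ * leviCivita (Fin.cons j K : Fin (n+2) → Fin (n+2))
              * ∏ b, pd (⇑e b) (x (K b)) u)).symm
      _ = ∑ K : Fin (n+1) → Fin (n+2), ((Equiv.Perm.sign e : ℤ) : ℝ) * ((ρ u)⁻¹ *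
            (leviCivita (Fin.cons j K : Fin (n+2) → Fin (n+2)) * ∏ b, pd b (x (K b)) u)) :=
          Finset.sum_congr rfl fun K _ => hre K
      _ = _ := by rw [← Finset.mul_sum, ← Finset.mul_sum]
  calc ∑ e : Equiv.Perm (Fin (n+1)), ((Equiv.Perm.sign e : ℤ) : ℝ) *
        ∑ K : Fin (n+1) → Fin (n+2), (ρ u)⁻¹ *
          leviCivita (Fin.cons j K : Fin (n+2) → Fin (n+2)) * ∏ b, pd (⇑e b) (x (K b)) u
      = ∑ e : Equiv.Perm (Fin (n+1)), ((Equiv.Perm.sign e : ℤ) : ℝ) *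
          (((Equiv.Perm.sign e : ℤ) : ℝ) * ((ρ u)⁻¹ *
            ∑ K : Fin (n+1) → Fin (n+2),
              leviCivita (Fin.cons j K : Fin (n+2) → Fin (n+2)) * ∏ b, pd b (x (K b)) u)) :=
        Finset.sum_congr rfl fun e _ => by rw [step2 e]
    _ = ∑ e : Equiv.Perm (Fin (n+1)), (ρ u)⁻¹ *
          ∑ K : Fin (n+1) → Fin (n+2),
            leviCivita (Fin.cons j K : Fin (n+2) → Fin (n+2)) * ∏ b, pd b (x (K b)) u := by
        refine Finset.sum_congr rfl fun e _ => ?_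
        have hs : ((Equiv.Perm.sign e : ℤ) : ℝ) * ((Equiv.Perm.sign e : ℤ) : ℝ) = 1 := by
          rcases Int.units_eq_one_or (Equiv.Perm.sign e) with h | h <;> rw [h] <;> norm_num
        rw [← mul_assoc, hs, one_mul]
    _ = _ := by
        rw [Finset.sum_const, Finset.card_univ, Fintype.card_perm, Fintype.card_fin]
        simp only [nsmul_eq_mul]
        ring

open Matrix in
lemma main_identity {n : ℕ}
    (Gm : Matrix (Fin (n+2)) (Fin (n+2)) ℝ) (g : Matrix (Fin (n+1)) (Fin (n+1)) ℝ)
    (hGm : Gm.PosDef)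
    (W : Fin (n+2) → ℝ) (E : Fin (n+1) → Fin (n+2) → ℝ)
    (hW : ∀ j, W j = ∑ K : Fin (n+1) → Fin (n+2),
        leviCivita (Fin.cons j K : Fin (n+2) → Fin (n+2)) * ∏ b, E b (K b))
    (hg : ∀ a b, g a b = ∑ i, ∑ k, Gm i k * E a i * E b k)
    (hgd : g.det ≠ 0)
    (horth : ∀ a, ∑ j, W j * E a j = 0) :
    Gm.det * (∑ j, ∑ k, Gm⁻¹ j k * W j * W k) = g.det := by
  classical
  have hdet : IsUnit Gm.det := isUnit_iff_ne_zero.2 (ne_of_gt hGm.det_pos)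
  have hsym : Gm.transpose = Gm := by
    ext i j
    have := congrFun (congrFun hGm.isHermitian i) j
    simpa [Matrix.conjTranspose_apply] using this
  set A : (Fin (n+2) → ℝ) → Matrix (Fin (n+2)) (Fin (n+2)) ℝ :=
    fun w => Matrix.of fun i t => (Fin.cons w E : Fin (n+2) → Fin (n+2) → ℝ) t i with hA
  have hdetA : ∀ w, (A w).det = ∑ j, w j * W j := by
    intro w
    rw [hA, det_cons_col]
    exact Finset.sum_congr rfl fun j _ => by rw [hW j]
  set v : Fin (n+2) → ℝ := Gm⁻¹ *ᵥ W with hv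
  have hGv : ∀ k, ∑ i, v i * Gm i k = W k := by
    have hvm : Matrix.vecMul v Gm = W := by
      rw [← hsym, Matrix.vecMul_transpose, hv, Matrix.mulVec_mulVec,
        Matrix.mul_nonsing_inv _ hdet, Matrix.one_mulVec]
    intro k
    have := congrFun hvm k
    simpa [Matrix.vecMul, dotProduct] using this
  have hentry : ∀ w t s, ((A v)ᵀ * Gm * A w) t s
      = ∑ k, (∑ i, A v i t * Gm i k) * A w k s := by
    intro w t s
    rw [Matrix.mul_apply]
    refine Finset.sum_congr rfl fun k _ => ?_
    rw [Matrix.mul_apply]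
    congr 1
  have hrow00 : ∀ w, ((A v)ᵀ * Gm * A w) 0 0 = ∑ k, W k * w k := by
    intro w
    rw [hentry]
    refine Finset.sum_congr rfl fun k _ => ?_
    have h1 : ∀ i, A v i (0 : Fin (n+2)) = v i := fun i => rfl
    have h2 : A w k (0 : Fin (n+2)) = w k := rfl
    simp only [h1, h2, hGv k]
  have hrow0succ : ∀ w (b : Fin (n+1)), ((A v)ᵀ * Gm * A w) 0 (Fin.succ b) = 0 := by
    intro w b
    rw [hentry]
    have : ∀ k, (∑ i, A v i (0 : Fin (n+2)) * Gm i k) * A w k (Fin.succ b)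
        = W k * E b k := by
      intro k
      have h1 : ∀ i, A v i (0 : Fin (n+2)) = v i := fun i => rfl
      have h2 : A w k (Fin.succ b) = E b k := rfl
      simp only [h1, h2, hGv k]
    rw [Finset.sum_congr rfl fun k _ => this k]
    exact horth b
  have hsubm : ∀ w (a b : Fin (n+1)), ((A v)ᵀ * Gm * A w) (Fin.succ a) (Fin.succ b) = g a b := by
    intro w a b
    rw [hentry, hg]
    rw [Finset.sum_comm]
    refine Finset.sum_congr rfl fun k _ => ?_
    have h1 : ∀ i, A v i (Fin.succ a) = E a i := fun i => rfl
    have h2 : A w k (Fin.succ b) = E b k := rfl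
    simp only [h1, h2, Finset.sum_mul]
    exact Finset.sum_congr rfl fun i _ => by ring
  have hdetB : ∀ w, ((A v)ᵀ * Gm * A w).det = (∑ k, W k * w k) * g.det := by
    intro w
    rw [Matrix.det_succ_row_zero]
    rw [Finset.sum_eq_single_of_mem 0 (Finset.mem_univ _) ?side]
    case side =>
      intro s _ hs
      obtain ⟨b, rfl⟩ := Fin.eq_succ_of_ne_zero hs
      rw [hrow0succ w b, mul_zero, zero_mul]
    have hsubeq : ((A v)ᵀ * Gm * A w).submatrix Fin.succ (Fin.succAbove 0) = g := by
      ext a b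
      rw [Matrix.submatrix_apply, Fin.succAbove_zero]
      exact hsubm w a b
    rw [hsubeq, hrow00 w]
    simp
  have hdetB2 : ∀ w, ((A v)ᵀ * Gm * A w).det = (A v).det * Gm.det * (A w).det := by
    intro w
    rw [Matrix.det_mul, Matrix.det_mul, Matrix.det_transpose]
  have key : ∀ w : Fin (n+2) → ℝ, (∑ k, W k * w k) * g.det
      = ((∑ j, v j * W j) * Gm.det) * ∑ j, w j * W j := by
    intro w
    rw [← hdetB w, hdetB2 w, hdetA, hdetA, mul_assoc]
  have hli : LinearIndependent ℝ E := by
    rw [Fintype.linearIndependent_iff]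
    intro c hc
    have hck : ∀ k, ∑ b, c b * E b k = 0 := by
      intro k
      have := congrFun hc k
      simpa [Finset.sum_apply] using this
    have hgc : g.mulVec c = 0 := by
      funext a
      show ∑ b, g a b * c b = 0
      calc ∑ b, g a b * c b
          = ∑ b, ∑ i, ∑ k, Gm i k * E a i * E b k * c b := by
            refine Finset.sum_congr rfl fun b _ => ?_
            rw [hg, Finset.sum_mul]
            refine Finset.sum_congr rfl fun i _ => ?_
            rw [Finset.sum_mul]
        _ = ∑ i, ∑ b, ∑ k, Gm i k * E a i * E b k * c b := Finset.sum_comm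
        _ = ∑ i, ∑ k, ∑ b, Gm i k * E a i * E b k * c b := by
            exact Finset.sum_congr rfl fun i _ => Finset.sum_comm
        _ = ∑ i, ∑ k, (Gm i k * E a i) * ∑ b, c b * E b k := by
            refine Finset.sum_congr rfl fun i _ => Finset.sum_congr rfl fun k _ => ?_
            rw [Finset.mul_sum]
            exact Finset.sum_congr rfl fun b _ => by ring
        _ = 0 := by
            refine Finset.sum_eq_zero fun i _ => Finset.sum_eq_zero fun k _ => ?_
            rw [hck k, mul_zero]
    have hc0 : c = 0 := by
      by_contra h
      exact hgd (Matrix.exists_mulVec_eq_zero_iff.mp ⟨c, h, hgc⟩)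
    intro b; rw [hc0]; rfl
  have hspan : ∃ w : Fin (n+2) → ℝ, w ∉ Submodule.span ℝ (Set.range E) := by
    by_contra h
    push_neg at h
    have htop : Submodule.span ℝ (Set.range E) = ⊤ := eq_top_iff.2 fun w _ => h w
    have h1 : Module.finrank ℝ (Submodule.span ℝ (Set.range E)) = n + 1 := by
      rw [finrank_span_eq_card hli, Fintype.card_fin]
    rw [htop, finrank_top, Module.finrank_fintype_fun_eq_card, Fintype.card_fin] at h1
    omega
  obtain ⟨w, hw⟩ := hspan
  have hAwdet : (A w).det ≠ 0 := by
    intro h0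
    obtain ⟨c, hc0, hcz⟩ := Matrix.exists_mulVec_eq_zero_iff.mpr h0
    have hAc : ∀ i, c 0 * w i + ∑ b, c (Fin.succ b) * E b i = 0 := by
      intro i
      have := congrFun hcz i
      have hexp : (A w *ᵥ c) i = ∑ t, (Fin.cons w E : Fin (n+2) → Fin (n+2) → ℝ) t i * c t := by
        simp [Matrix.mulVec, dotProduct, hA]
      rw [hexp, Fin.sum_univ_succ] at this
      simp only [Fin.cons_zero, Fin.cons_succ] at this
      rw [show (0 : Fin (n+2) → ℝ) i = 0 from rfl] at this
      calc c 0 * w i + ∑ b, c (Fin.succ b) * E b i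
          = w i * c 0 + ∑ b, E b i * c (Fin.succ b) := by
            rw [mul_comm]
            exact congrArg _ (Finset.sum_congr rfl fun b _ => by ring)
        _ = 0 := this
    have hc00 : c 0 = 0 := by
      by_contra hc00
      apply hw
      have hwv : w = (-(c 0)⁻¹) • ∑ b, c (Fin.succ b) • E b := by
        funext i
        have h := hAc i
        have : w i = -(c 0)⁻¹ * ∑ b, c (Fin.succ b) * E b i := by
          field_simp
          linarith [h]
        rw [this]
        simp [Finset.sum_apply]
      rw [hwv]
      exact Submodule.smul_mem _ _ (Submodule.sum_mem _ fun b _ =>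
        Submodule.smul_mem _ _ (Submodule.subset_span ⟨b, rfl⟩))
    have hcsucc : ∀ b, c (Fin.succ b) = 0 := by
      have hsum : ∑ b, c (Fin.succ b) • E b = 0 := by
        funext i
        have := hAc i
        rw [hc00, zero_mul, zero_add] at this
        simpa [Finset.sum_apply] using this
      exact fun b => Fintype.linearIndependent_iff.mp hli _ hsum b
    apply hc0
    funext t
    refine Fin.cases ?_ ?_ t
    · exact hc00
    · exact hcsucc
  have hWne : ∃ j, W j ≠ 0 := by
    by_contra h
    push_neg at h
    apply hAwdet
    rw [hdetA]
    exact Finset.sum_eq_zero fun j _ => by rw [h j, mul_zero]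
  have hWW : (∑ k, W k * W k) ≠ 0 := by
    obtain ⟨j0, hj0⟩ := hWne
    have : 0 < ∑ k, W k * W k :=
      Finset.sum_pos' (fun k _ => mul_self_nonneg _) ⟨j0, Finset.mem_univ _, mul_self_pos.2 hj0⟩
    exact ne_of_gt this
  have hmain := key W
  have hcancel : g.det = (∑ j, v j * W j) * Gm.det := by
    have h2 : (∑ k, W k * W k) * g.det
        = (∑ k, W k * W k) * ((∑ j, v j * W j) * Gm.det) := by
      rw [hmain]; ring
    exact mul_left_cancel₀ hWW h2
  have hvW : ∑ j, v j * W j = ∑ j, ∑ k, Gm⁻¹ j k * W j * W k := by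
    refine Finset.sum_congr rfl fun j _ => ?_
    have : v j = ∑ k, Gm⁻¹ j k * W k := by
      simp [hv, Matrix.mulVec, dotProduct]
    rw [this, Finset.sum_mul]
    exact Finset.sum_congr rfl fun k _ => by ring
  rw [hcancel, hvW]
  ring

end Aux

/-- The vectors `Z_α` are normal to `TΣ`: `ḡ(Z_α, e_a) = 0`; and for a
hypersurface (codimension `p = 1`, i.e. `q = 0`), `Z` has unit length. -/
theorem Zvec_normal_and_unit_for_hypersurface {n q : ℕ}
    (ρ : (Fin (n + 1) → ℝ) → ℝ)
    (x : Fin (n + 1 + q + 1) → (Fin (n + 1) → ℝ) → ℝ)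
    (G : (Fin (n + 1) → ℝ) → Matrix (Fin (n + 1 + q + 1)) (Fin (n + 1 + q + 1)) ℝ)
    (hρ : ∀ u, ρ u ≠ 0)
    (hx : ∀ i, ContDiff ℝ (⊤ : ℕ∞) (x i))
    (hG : ∀ u, (G u).PosDef)
    (hg : ∀ u, 0 < (inducedMetric G x u).det) :
    (∀ u, ∀ α : Fin q → Fin (n + 1 + q + 1), ∀ a : Fin (n + 1),
        ∑ i, ∑ j, G u i j * Zvec ρ x G u α i * pd a (x j) u = 0) ∧
    (q = 0 → ∀ u, ∀ α : Fin q → Fin (n + 1 + q + 1),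
        ∑ i, ∑ j, G u i j * Zvec ρ x G u α i * Zvec ρ x G u α j = 1) := by
  constructor
  · intro u α a
    rw [contraction ρ x G u α (hG u), Svec_contract_zero, mul_zero]
  · intro hq u α
    subst hq
    have hα : ∀ K : Fin (n+1) → Fin (n+1+0+1), Fin.append K α = K := by
      intro K
      funext t
      have ht : (t : ℕ) < n + 1 := t.isLt
      simp only [Fin.append, Fin.addCases, dif_pos ht]
      congr 1
    -- notation
    set Gm := G u with hGm
    set g := inducedMetric G x u with hgdef
    have hgd : g.det ≠ 0 := ne_of_gt (hg u)
    set E : Fin (n+1) → Fin (n+1+0+1) → ℝ := fun b i => pd b (x i) u with hE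
    set W : Fin (n+1+0+1) → ℝ := fun j =>
      ∑ K : Fin (n+1) → Fin (n+1+0+1),
        leviCivita (Fin.cons j K : Fin (n+1+0+1) → Fin (n+1+0+1)) * ∏ b, E b (K b) with hWdef
    have horth : ∀ a : Fin (n+1), ∑ j, W j * E a j = 0 := by
      intro a
      have h0 := pair_zero x u α a id Function.bijective_id
      rw [Fintype.sum_prod_type] at h0
      simp only [hα, id_eq] at h0
      rw [← h0]
      refine Finset.sum_congr rfl fun j _ => ?_
      rw [hWdef, Finset.sum_mul]
      refine Finset.sum_congr rfl fun K _ => ?_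
      simp only [hE]
      ring
    have hmain : Gm.det * (∑ j, ∑ k, Gm⁻¹ j k * W j * W k) = g.det := by
      refine main_identity Gm g (hG u) W E (fun j => rfl) ?_ hgd horth
      intro a b
      rfl
    -- collapse Svec
    have hSvec : ∀ j, Svec ρ x G u α j
        = (Real.sqrt Gm.det * ((ρ u)⁻¹ * (Nat.factorial (n+1) : ℝ))) * W j := by
      intro j
      rw [Svec]
      simp only [hα]
      calc ∑ K : Fin (n+1) → Fin (n+1+0+1),
            Real.sqrt Gm.det *
              leviCivita (Fin.cons j K : Fin (n+1+0+1) → Fin (n+1+0+1)) *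
              nambu ρ (fun b => x (K b)) u
          = Real.sqrt Gm.det * ∑ K : Fin (n+1) → Fin (n+1+0+1),
              leviCivita (Fin.cons j K : Fin (n+1+0+1) → Fin (n+1+0+1)) *
                nambu ρ (fun b => x (K b)) u := by
            rw [Finset.mul_sum]
            exact Finset.sum_congr rfl fun K _ => by ring
        _ = Real.sqrt Gm.det * ((ρ u)⁻¹ * (Nat.factorial (n+1) : ℝ) *
              ∑ K : Fin (n+1) → Fin (n+1+0+1),
                leviCivita (Fin.cons j K : Fin (n+1+0+1) → Fin (n+1+0+1)) *
                  ∏ b, pd b (x (K b)) u) := by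
            rw [nambu_collapse ρ x u j]
        _ = _ := by
            rw [hWdef]
            ring
    -- main computation
    rw [contraction ρ x G u α (hG u) (Zvec ρ x G u α)]
    have hZj : ∀ j, Svec ρ x G u α j * Zvec ρ x G u α j
        = cZ (q := 0) ρ x G u * ∑ k, (G u)⁻¹ j k * (Svec ρ x G u α j * Svec ρ x G u α k) := by
      intro j
      rw [Zvec_eq, Finset.mul_sum, Finset.mul_sum, Finset.mul_sum]
      exact Finset.sum_congr rfl fun k _ => by ring
    calc cZ (q := 0) ρ x G u * ∑ j, Svec ρ x G u α j * Zvec ρ x G u α j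
        = cZ (q := 0) ρ x G u * ∑ j, cZ (q := 0) ρ x G u *
            ∑ k, (G u)⁻¹ j k * (Svec ρ x G u α j * Svec ρ x G u α k) := by
          rw [Finset.mul_sum, Finset.mul_sum]
          exact Finset.sum_congr rfl fun j _ => by rw [hZj j]
      _ = cZ (q := 0) ρ x G u * (cZ (q := 0) ρ x G u *
            ((Real.sqrt Gm.det * ((ρ u)⁻¹ * (Nat.factorial (n+1) : ℝ)))
              * (Real.sqrt Gm.det * ((ρ u)⁻¹ * (Nat.factorial (n+1) : ℝ))) *
            ∑ j, ∑ k, Gm⁻¹ j k * W j * W k)) := by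
          congr 1
          rw [Finset.mul_sum, Finset.mul_sum]
          refine Finset.sum_congr rfl fun j _ => ?_
          rw [Finset.mul_sum, Finset.mul_sum, Finset.mul_sum]
          refine Finset.sum_congr rfl fun k _ => ?_
          rw [hSvec j, hSvec k]
          ring
      _ = 1 := by
          have hdGpos : (0:ℝ) < Gm.det := (hG u).det_pos
          have hdgpos : (0:ℝ) < g.det := hg u
          have hsG : Real.sqrt Gm.det * Real.sqrt Gm.det = Gm.det :=
            Real.mul_self_sqrt (le_of_lt hdGpos)
          have hsg : Real.sqrt g.det * Real.sqrt g.det = g.det :=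
            Real.mul_self_sqrt (le_of_lt hdgpos)
          have hsGne : Real.sqrt Gm.det ≠ 0 :=
            ne_of_gt (Real.sqrt_pos.2 hdGpos)
          have hsgne : Real.sqrt g.det ≠ 0 :=
            ne_of_gt (Real.sqrt_pos.2 hdgpos)
          have hFne : ((Nat.factorial (n+1) : ℝ)) ≠ 0 :=
            Nat.cast_ne_zero.2 (Nat.factorial_ne_zero _)
          have hρne : ρ u ≠ 0 := hρ u
          have hcZ : cZ (q := 0) ρ x G u
              = ((Real.sqrt g.det / ρ u) * (Nat.factorial (n+1) : ℝ) * 1)⁻¹ := by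
            rw [cZ]
            norm_num
            exact Or.inl rfl
          rw [hcZ]
          have hs : ∑ j, ∑ k, Gm⁻¹ j k * W j * W k = g.det / Gm.det := by
            rw [eq_div_iff (ne_of_gt hdGpos), ← hmain]
            ring
          rw [hs]
          rw [div_eq_mul_inv g.det Gm.det, ← hsG, ← hsg]
          field_simp
          rw [Real.sqrt_sq (Real.sqrt_nonneg g.det), Real.sqrt_sq (Real.sqrt_nonneg Gm.det)]
end

section
/- Let (T_α, ℏ) be a unital matrix regularization, f a nowhere-vanishing smooth function, and f̂_α a sequence C⁰-converging to f such that each f̂_α is invertible with ||f̂_α^{-1}|| uniformly bounded. Then f̂_α^{-1} C⁰-converges to 1/f, i.e. lim_α ||f̂_α^{-1} − T_α(1/f)|| = 0. -/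
/-!
Write `fhinv - T(1/f) = fhinv * (1 - fh * T(1/f))`. The inverses are uniformly bounded, so it
suffices that `T(1/f)` is asymptotically a right inverse of `fh`; and `fh * T(1/f) - 1` splits
into `(fh - T f) * T(1/f)`, the product defect `T f * T(1/f) - T(f * (1/f))` and the unitality
defect `T 1 - 1`, each of which tends to zero.
-/

open scoped BigOperators Topology

/-- The operator norm of a complex `N × N` matrix (acting on `ℓ²`). -/
noncomputable def opn {N : ℕ} (M : Matrix (Fin N) (Fin N) ℂ) : ℝ :=
  ‖(Matrix.toEuclideanCLM (𝕜 := ℂ) M :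
      EuclideanSpace ℂ (Fin N) →L[ℂ] EuclideanSpace ℂ (Fin N))‖

open scoped Matrix.Norms.L2Operator

theorem norm_sub_le_of_mul_eq_one {R : Type*} [SeminormedRing R] {x y a z : R} (h : y * x = 1) :
    ‖y - z‖ ≤ ‖y‖ * (‖x - a‖ * ‖z‖ + ‖a * z - 1‖) := by
  have hzy : z - y = y * ((x - a) * z + (a * z - 1)) := by
    rw [show (x - a) * z + (a * z - 1) = x * z - 1 by noncomm_ring,
      mul_sub, ← mul_assoc, h, one_mul, mul_one]
  calc ‖y - z‖ ≤ ‖y‖ * ‖(x - a) * z + (a * z - 1)‖ := by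
        rw [norm_sub_rev, hzy]
        exact norm_mul_le _ _
    _ ≤ ‖y‖ * (‖x - a‖ * ‖z‖ + ‖a * z - 1‖) := by
      gcongr
      exact (norm_add_le _ _).trans (add_le_add_left (norm_mul_le _ _) _)

theorem opn_eq_norm {N : ℕ} (M : Matrix (Fin N) (Fin N) ℂ) : opn M = ‖M‖ := rfl

/-- `t` will be `T 1 = T (f * (1/f))`, separating the product defect from the unitality defect. -/
theorem opn_sub_le_of_mul_eq_one {N : ℕ} {x y a z t : Matrix (Fin N) (Fin N) ℂ} {C D : ℝ}
    (h : y * x = 1) (hy : opn y ≤ C) (hz : opn z ≤ D) :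
    opn (y - z) ≤ C * (opn (x - a) * D + opn (t - a * z) + opn (t - 1)) := by
  simp only [opn_eq_norm] at *
  calc ‖y - z‖ ≤ ‖y‖ * (‖x - a‖ * ‖z‖ + ‖a * z - 1‖) := norm_sub_le_of_mul_eq_one h
    _ ≤ C * (‖x - a‖ * D + ‖t - a * z‖ + ‖t - 1‖) := by
      have hC : 0 ≤ C := (norm_nonneg y).trans hy
      rw [add_assoc]
      gcongr
      rw [norm_sub_rev t]
      exact norm_sub_le_norm_sub_add_norm_sub _ _ _

theorem inverse_sequence_converges_general
    {F : Type*} [CommRing F] [Algebra ℝ F]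
    (Nseq : ℕ → ℕ)
    (T : ∀ α : ℕ, F →ₗ[ℝ] Matrix (Fin (Nseq α)) (Fin (Nseq α)) ℂ)
    (hbound : ∀ g : F, ∃ C : ℝ, ∀ α, opn (T α g) ≤ C)
    (hprod : ∀ g k : F,
      Filter.Tendsto (fun α => opn (T α (g * k) - T α g * T α k))
        Filter.atTop (𝓝 0))
    (hunital :
      Filter.Tendsto (fun α => opn (T α 1 - 1)) Filter.atTop (𝓝 0))
    -- `f` nowhere vanishing: `finv = 1/f` is a smooth function with `f·(1/f) = 1`
    (f finv : F) (hfinv : f * finv = 1)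
    (fh fhinv : ∀ α, Matrix (Fin (Nseq α)) (Fin (Nseq α)) ℂ)
    (hfconv : Filter.Tendsto (fun α => opn (fh α - T α f)) Filter.atTop (𝓝 0))
    (hinvr : ∀ α, fhinv α * fh α = 1)
    (hub : ∃ C : ℝ, ∀ α, opn (fhinv α) ≤ C) :
    Filter.Tendsto (fun α => opn (fhinv α - T α finv)) Filter.atTop (𝓝 0) := by
  obtain ⟨C, hC⟩ := hub
  obtain ⟨D, hD⟩ := hbound finv
  have hdefect := hprod f finv
  rw [hfinv] at hdefect
  refine squeeze_zero (fun α => norm_nonneg _)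
    (fun α => opn_sub_le_of_mul_eq_one (hinvr α) (hC α) (hD α) (a := T α f) (t := T α 1)) ?_
  simpa using (((hfconv.mul_const D).add hdefect).add hunital).const_mul C

/-- In a unital matrix regularization, if `f̂_α` `C⁰`-converges to a nowhere
vanishing (hence invertible) `f` and the `f̂_α` are invertible with uniformly
bounded inverses, then `f̂_α⁻¹` `C⁰`-converges to `1/f`. -/
theorem inverse_sequence_converges
    {F : Type*} [CommRing F] [Algebra ℝ F]
    (I : F →ₗ[ℝ] ℝ)
    (Nseq : ℕ → ℕ) (hmono : StrictMono Nseq) (hpos : ∀ α, 0 < Nseq α)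
    (ℏ : ℕ → ℝ) (hℏpos : ∀ α, 0 < ℏ α)
    (T : ∀ α : ℕ, F →ₗ[ℝ] Matrix (Fin (Nseq α)) (Fin (Nseq α)) ℂ)
    (hherm : ∀ α (g : F), (T α g).IsHermitian)
    (hbound : ∀ g : F, ∃ C : ℝ, ∀ α, opn (T α g) ≤ C)
    (hprod : ∀ g k : F,
      Filter.Tendsto (fun α => opn (T α (g * k) - T α g * T α k))
        Filter.atTop (𝓝 0))
    (hunital :
      Filter.Tendsto (fun α => opn (T α 1 - 1)) Filter.atTop (𝓝 0))
    -- `f` nowhere vanishing: `finv = 1/f` is a smooth function with `f·(1/f) = 1`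
    (f finv : F) (hfinv : f * finv = 1)
    (fh fhinv : ∀ α, Matrix (Fin (Nseq α)) (Fin (Nseq α)) ℂ)
    (hfconv : Filter.Tendsto (fun α => opn (fh α - T α f)) Filter.atTop (𝓝 0))
    (hinvl : ∀ α, fh α * fhinv α = 1)
    (hinvr : ∀ α, fhinv α * fh α = 1)
    (hub : ∃ C : ℝ, ∀ α, opn (fhinv α) ≤ C) :
    Filter.Tendsto (fun α => opn (fhinv α - T α finv)) Filter.atTop (𝓝 0) :=
  inverse_sequence_converges_general Nseq T hbound hprod hunital f finv hfinv fh fhinv hfconv hinvr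
    hub
end

section
/- Let (T_α, ℏ_α) be a C^k-convergent matrix regularization and suppose f̂_α, ĥ_α are sequences C^k-converging to f and h. Then f̂_α ĥ_α C^k-converges to fh. (Proved by induction on k using the Leibniz rule ∂̂^{g}(f̂ĥ) = (∂̂^{g}f̂)ĥ + f̂(∂̂^{g}ĥ) for the derivation ∂̂^g(X) = (iℏ)^{-1}[X, T_α(g)].) -/
open scoped BigOperators Topology Matrix

/-- The iterated rescaled commutator
`∂̂^{A₁⋯A_l}(X) = (iℏ)⁻¹[∂̂^{A₂⋯A_l}(X), A₁]`. -/
noncomputable def matD {N : ℕ} (hb : ℝ) :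
    List (Matrix (Fin N) (Fin N) ℂ) → Matrix (Fin N) (Fin N) ℂ →
      Matrix (Fin N) (Fin N) ℂ
  | [], X => X
  | A :: rest, X =>
      ((Complex.I * (hb : ℂ))⁻¹) • (matD hb rest X * A - A * matD hb rest X)

/-- The iterated Poisson bracket `∂^{f₁⋯f_l}(h) = {f₁, ∂^{f₂⋯f_l}(h)}`. -/
def pbIter {F : Type*} (pb : F → F → F) : List F → F → F
  | [], h => h
  | g :: rest, h => pb g (pbIter pb rest h)

/-!
Write `X ≈ Y` when the operator norm of `X α - Y α` tends to zero. Since `X ↦ (iℏ)⁻¹[X, A]` is a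
derivation, the `w ++ [A]`-derivative of `f̂ ĥ` is the `w`-derivative of `(∂̂^A f̂) ĥ + f̂ (∂̂^A ĥ)`,
and `∂̂^A f̂`, `∂̂^A ĥ` `C^{k-1}`-converge to `{A, f}`, `{A, h}`. Induction on `k` then reduces
everything to order zero, where `f̂ ĥ ≈ T(f) T(h) ≈ T(fh)` because `T(f)`, `T(h)` are bounded.
-/

open Filter

section SeqApprox

variable {ι : Type*} {N : ι → ℕ} {l : Filter ι}

lemma opn_nonneg {n : ℕ} (A : Matrix (Fin n) (Fin n) ℂ) : 0 ≤ opn A := norm_nonneg _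

lemma opn_add_le {n : ℕ} (A B : Matrix (Fin n) (Fin n) ℂ) : opn (A + B) ≤ opn A + opn B := by
  unfold opn; rw [map_add]; exact norm_add_le _ _

lemma opn_mul_le {n : ℕ} (A B : Matrix (Fin n) (Fin n) ℂ) : opn (A * B) ≤ opn A * opn B := by
  unfold opn; rw [map_mul]; exact norm_mul_le _ _

lemma opn_sub_comm {n : ℕ} (A B : Matrix (Fin n) (Fin n) ℂ) : opn (A - B) = opn (B - A) := by
  unfold opn; rw [map_sub, map_sub, norm_sub_rev]

def SeqApprox (l : Filter ι) (X Y : ∀ i, Matrix (Fin (N i)) (Fin (N i)) ℂ) : Prop :=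
  Tendsto (fun i => opn (X i - Y i)) l (𝓝 0)

namespace SeqApprox

variable {X X' Y Y' Z : ∀ i, Matrix (Fin (N i)) (Fin (N i)) ℂ}

lemma symm (h : SeqApprox l X Y) : SeqApprox l Y X := by
  simpa only [SeqApprox, opn_sub_comm] using h

lemma add (hX : SeqApprox l X Y) (hX' : SeqApprox l X' Y') :
    SeqApprox l (X + X') (Y + Y') := by
  refine squeeze_zero (fun i => opn_nonneg _) (fun i => ?_) (by simpa using Tendsto.add hX hX')
  calc opn ((X + X') i - (Y + Y') i) = opn ((X i - Y i) + (X' i - Y' i)) := by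
        simp only [Pi.add_apply, add_sub_add_comm]
    _ ≤ opn (X i - Y i) + opn (X' i - Y' i) := opn_add_le _ _

lemma trans (hXY : SeqApprox l X Y) (hYZ : SeqApprox l Y Z) : SeqApprox l X Z := by
  refine squeeze_zero (fun i => opn_nonneg _) (fun i => ?_) (by simpa using Tendsto.add hXY hYZ)
  calc opn (X i - Z i) = opn ((X i - Y i) + (Y i - Z i)) := by rw [sub_add_sub_cancel]
    _ ≤ opn (X i - Y i) + opn (Y i - Z i) := opn_add_le _ _

lemma mul {CX CY : ℝ} (hCX : ∀ i, opn (X' i) ≤ CX) (hCY : ∀ i, opn (Y' i) ≤ CY)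
    (hX : SeqApprox l X X') (hY : SeqApprox l Y Y') : SeqApprox l (X * Y) (X' * Y') := by
  have hmajorant := ((Tendsto.mul hX hY).add (Tendsto.mul_const CY hX)).add (Tendsto.const_mul CX hY)
  rw [mul_zero, zero_mul, mul_zero, add_zero, add_zero] at hmajorant
  refine squeeze_zero (fun i => opn_nonneg _) (fun i => ?_) hmajorant
  have hXY : (X * Y) i - (X' * Y') i =
      (X i - X' i) * (Y i - Y' i) + (X i - X' i) * Y' i + X' i * (Y i - Y' i) := by
    simp only [Pi.mul_apply]; noncomm_ring
  rw [hXY]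
  refine (opn_add_le _ _).trans (add_le_add ((opn_add_le _ _).trans (add_le_add
    (opn_mul_le _ _) ((opn_mul_le _ _).trans ?_))) ((opn_mul_le _ _).trans ?_))
  · exact mul_le_mul_of_nonneg_left (hCY i) (opn_nonneg _)
  · exact mul_le_mul_of_nonneg_right (hCX i) (opn_nonneg _)

end SeqApprox

end SeqApprox

section Derivations

variable {n : ℕ} (hb : ℝ)

lemma matD_add (w : List (Matrix (Fin n) (Fin n) ℂ)) (X Y : Matrix (Fin n) (Fin n) ℂ) :
    matD hb w (X + Y) = matD hb w X + matD hb w Y := by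
  induction w with
  | nil => rfl
  | cons A w ih =>
    simp only [matD, ih, add_mul, mul_add, ← smul_add]
    congr 1
    abel

lemma matD_append (u v : List (Matrix (Fin n) (Fin n) ℂ)) (X : Matrix (Fin n) (Fin n) ℂ) :
    matD hb (u ++ v) X = matD hb u (matD hb v X) := by
  induction u with
  | nil => rfl
  | cons A u ih => simp only [List.cons_append, matD, ih]

lemma matD_singleton_mul (A X Y : Matrix (Fin n) (Fin n) ℂ) :
    matD hb [A] (X * Y) = matD hb [A] X * Y + X * matD hb [A] Y := by
  simp only [matD, smul_mul_assoc, mul_smul_comm, ← smul_add]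
  congr 1
  noncomm_ring

lemma pbIter_append {F : Type*} (pb : F → F → F) (u v : List F) (x : F) :
    pbIter pb (u ++ v) x = pbIter pb u (pbIter pb v x) := by
  induction u with
  | nil => rfl
  | cons g u ih => simp only [List.cons_append, pbIter, ih]

end Derivations

section Regularization

variable {F : Type*} [Ring F] [Module ℝ F] {ι : Type*} {l : Filter ι} {N : ι → ℕ}
  (pb : F → F → F) (ℏ : ι → ℝ) (T : ∀ i, F →ₗ[ℝ] Matrix (Fin (N i)) (Fin (N i)) ℂ)

def CkConverges (l : Filter ι) (k : ℕ) (X : ∀ i, Matrix (Fin (N i)) (Fin (N i)) ℂ) (f : F) :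
    Prop :=
  ∀ w : List F, w.length ≤ k →
    SeqApprox l (fun i => matD (ℏ i) (w.map (T i)) (X i)) (fun i => T i (pbIter pb w f))

variable {pb ℏ T} {k : ℕ} {X Y : ∀ i, Matrix (Fin (N i)) (Fin (N i)) ℂ} {f h : F}

lemma ckConverges_iff :
    CkConverges pb ℏ T l k X f ↔ SeqApprox l X (fun i => T i f) ∧
      ∀ w : List F, 1 ≤ w.length → w.length ≤ k →
        SeqApprox l (fun i => matD (ℏ i) (w.map (T i)) (X i)) (fun i => T i (pbIter pb w f)) := by
  refine ⟨fun hX => ⟨hX [] (Nat.zero_le k), fun w _ hw => hX w hw⟩, fun ⟨hX0, hX⟩ w hw => ?_⟩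
  cases w with
  | nil => exact hX0
  | cons g w => exact hX _ (by simp) hw

lemma ckConverges_zero_iff :
    CkConverges pb ℏ T l 0 X f ↔ SeqApprox l X (fun i => T i f) := by
  rw [ckConverges_iff]
  exact and_iff_left fun w h1 h2 => absurd (h1.trans h2) (by omega)

lemma ckConverges_succ_iff :
    CkConverges pb ℏ T l (k + 1) X f ↔ SeqApprox l X (fun i => T i f) ∧
      ∀ A : F, CkConverges pb ℏ T l k (fun i => matD (ℏ i) [T i A] (X i)) (pb A f) := by
  refine ⟨fun hX => ⟨hX [] (Nat.zero_le _), fun A w hw => ?_⟩, ?_⟩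
  · have := hX (w ++ [A]) (by simpa using hw)
    simpa only [List.map_append, List.map_cons, List.map_nil, matD_append, pbIter_append,
      pbIter] using this
  · rintro ⟨hX0, hXd⟩ w hw
    rcases w.eq_nil_or_concat' with rfl | ⟨u, A, rfl⟩
    · exact hX0
    · have := hXd A u (by simpa using hw)
      simpa only [List.map_append, List.map_cons, List.map_nil, matD_append, pbIter_append,
        pbIter] using this

lemma CkConverges.mono {m : ℕ} (hmk : m ≤ k) (hX : CkConverges pb ℏ T l k X f) :
    CkConverges pb ℏ T l m X f :=
  fun w hw => hX w (hw.trans hmk)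

/-- The bracket need not be additive, so `T (∂^w (f + h)) ≈ T (∂^w f) + T (∂^w h)` is obtained
by passing through `∂̂^w (T f + T h)`, using that `T g` itself `C^k`-converges to `g`. -/
lemma CkConverges.add (hreg : ∀ g : F, CkConverges pb ℏ T l k (fun i => T i g) g)
    (hX : CkConverges pb ℏ T l k X f) (hY : CkConverges pb ℏ T l k Y h) :
    CkConverges pb ℏ T l k (X + Y) (f + h) := by
  intro w hw
  have hmatD : (fun i => matD (ℏ i) (w.map (T i)) ((X + Y) i)) =
      (fun i => matD (ℏ i) (w.map (T i)) (X i)) + (fun i => matD (ℏ i) (w.map (T i)) (Y i)) :=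
    funext fun i => matD_add _ _ _ _
  have hT : (fun i => matD (ℏ i) (w.map (T i)) (T i (f + h))) =
      (fun i => matD (ℏ i) (w.map (T i)) (T i f)) +
        (fun i => matD (ℏ i) (w.map (T i)) (T i h)) :=
    funext fun i => by rw [map_add, matD_add]; rfl
  rw [hmatD]
  refine ((hX w hw).add (hY w hw)).trans (((hreg f w hw).add (hreg h w hw)).symm.trans ?_)
  rw [← hT]
  exact hreg (f + h) w hw

lemma SeqApprox.mul_map (hbound : ∀ g : F, ∃ C : ℝ, ∀ i, opn (T i g) ≤ C)
    (hprod : ∀ g g' : F, SeqApprox l (fun i => T i (g * g')) (fun i => T i g * T i g'))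
    (hX : SeqApprox l X (fun i => T i f)) (hY : SeqApprox l Y (fun i => T i h)) :
    SeqApprox l (X * Y) (fun i => T i (f * h)) := by
  obtain ⟨Cf, hCf⟩ := hbound f
  obtain ⟨Ch, hCh⟩ := hbound h
  exact (hX.mul hCf hCh hY).trans (hprod f h).symm

theorem CkConverges.mul (hleib : ∀ g a b : F, pb g (a * b) = pb g a * b + a * pb g b)
    (hbound : ∀ g : F, ∃ C : ℝ, ∀ i, opn (T i g) ≤ C)
    (hprod : ∀ g g' : F, SeqApprox l (fun i => T i (g * g')) (fun i => T i g * T i g'))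
    (hreg : ∀ g : F, CkConverges pb ℏ T l k (fun i => T i g) g)
    (hX : CkConverges pb ℏ T l k X f) (hY : CkConverges pb ℏ T l k Y h) :
    CkConverges pb ℏ T l k (X * Y) (f * h) := by
  induction k generalizing X Y f h with
  | zero =>
    rw [ckConverges_zero_iff] at hX hY ⊢
    exact hX.mul_map hbound hprod hY
  | succ k ih =>
    have hreg' := fun g => (hreg g).mono k.le_succ
    obtain ⟨hX0, hXd⟩ := ckConverges_succ_iff.1 hX
    obtain ⟨hY0, hYd⟩ := ckConverges_succ_iff.1 hY
    refine ckConverges_succ_iff.2 ⟨hX0.mul_map hbound hprod hY0, fun A => ?_⟩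
    have hleft := ih hreg' (hXd A) (hY.mono k.le_succ)
    have hright := ih hreg' (hX.mono k.le_succ) (hYd A)
    have := hleft.add hreg' hright
    rw [← hleib] at this
    convert this using 1
    exact funext fun i => matD_singleton_mul _ _ _ _

end Regularization

theorem product_sequence_Ck_converges_general
    {F : Type*} [CommRing F] [Algebra ℝ F]
    (pb : F → F → F)
    (hleib : ∀ g a b : F, pb g (a * b) = pb g a * b + a * pb g b)
    (Nseq : ℕ → ℕ)
    (ℏ : ℕ → ℝ)
    (T : ∀ α : ℕ, F →ₗ[ℝ] Matrix (Fin (Nseq α)) (Fin (Nseq α)) ℂ)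
    (hbound : ∀ g : F, ∃ C : ℝ, ∀ α, opn (T α g) ≤ C)
    (hprod : ∀ g g' : F,
      Filter.Tendsto (fun α => opn (T α (g * g') - T α g * T α g'))
        Filter.atTop (𝓝 0))
    (k : ℕ)
    (hreg : ∀ g : F, ∀ w : List F, w.length ≤ k →
      Filter.Tendsto
        (fun α => opn (matD (ℏ α) (w.map (fun v => T α v)) (T α g) -
          T α (pbIter pb w g)))
        Filter.atTop (𝓝 0))
    (f h : F)
    (fh hh : ∀ α, Matrix (Fin (Nseq α)) (Fin (Nseq α)) ℂ)
    (hf0 : Filter.Tendsto (fun α => opn (fh α - T α f)) Filter.atTop (𝓝 0))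
    (hh0 : Filter.Tendsto (fun α => opn (hh α - T α h)) Filter.atTop (𝓝 0))
    (hfk : ∀ w : List F, 1 ≤ w.length → w.length ≤ k →
      Filter.Tendsto
        (fun α => opn (matD (ℏ α) (w.map (fun v => T α v)) (fh α) -
          T α (pbIter pb w f)))
        Filter.atTop (𝓝 0))
    (hhk : ∀ w : List F, 1 ≤ w.length → w.length ≤ k →
      Filter.Tendsto
        (fun α => opn (matD (ℏ α) (w.map (fun v => T α v)) (hh α) -
          T α (pbIter pb w h)))
        Filter.atTop (𝓝 0)) :
    (Filter.Tendsto (fun α => opn (fh α * hh α - T α (f * h)))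
        Filter.atTop (𝓝 0)) ∧
    (∀ w : List F, 1 ≤ w.length → w.length ≤ k →
      Filter.Tendsto
        (fun α => opn (matD (ℏ α) (w.map (fun v => T α v)) (fh α * hh α) -
          T α (pbIter pb w (f * h))))
        Filter.atTop (𝓝 0)) := by
  have hfC : CkConverges pb ℏ T atTop k fh f := ckConverges_iff.2 ⟨hf0, hfk⟩
  have hhC : CkConverges pb ℏ T atTop k hh h := ckConverges_iff.2 ⟨hh0, hhk⟩
  exact ckConverges_iff.1 (hfC.mul hleib hbound hprod hreg hhC)

/-- In a `C^k`-convergent matrix regularization, if `f̂_α` and `ĥ_α`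
`C^k`-converge to `f` and `h`, then `f̂_α ĥ_α` `C^k`-converges to `fh`. -/
theorem product_sequence_Ck_converges
    {F : Type*} [CommRing F] [Algebra ℝ F]
    (pb : F → F → F)
    (hleib : ∀ g a b : F, pb g (a * b) = pb g a * b + a * pb g b)
    (Nseq : ℕ → ℕ) (hmono : StrictMono Nseq) (hpos : ∀ α, 0 < Nseq α)
    (ℏ : ℕ → ℝ) (hℏpos : ∀ α, 0 < ℏ α)
    (T : ∀ α : ℕ, F →ₗ[ℝ] Matrix (Fin (Nseq α)) (Fin (Nseq α)) ℂ)
    (hherm : ∀ α (g : F), (T α g).IsHermitian)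
    (hbound : ∀ g : F, ∃ C : ℝ, ∀ α, opn (T α g) ≤ C)
    (hprod : ∀ g g' : F,
      Filter.Tendsto (fun α => opn (T α (g * g') - T α g * T α g'))
        Filter.atTop (𝓝 0))
    (k : ℕ)
    (hreg : ∀ g : F, ∀ w : List F, w.length ≤ k →
      Filter.Tendsto
        (fun α => opn (matD (ℏ α) (w.map (fun v => T α v)) (T α g) -
          T α (pbIter pb w g)))
        Filter.atTop (𝓝 0))
    (f h : F)
    (fh hh : ∀ α, Matrix (Fin (Nseq α)) (Fin (Nseq α)) ℂ)
    (hf0 : Filter.Tendsto (fun α => opn (fh α - T α f)) Filter.atTop (𝓝 0))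
    (hh0 : Filter.Tendsto (fun α => opn (hh α - T α h)) Filter.atTop (𝓝 0))
    (hfk : ∀ w : List F, 1 ≤ w.length → w.length ≤ k →
      Filter.Tendsto
        (fun α => opn (matD (ℏ α) (w.map (fun v => T α v)) (fh α) -
          T α (pbIter pb w f)))
        Filter.atTop (𝓝 0))
    (hhk : ∀ w : List F, 1 ≤ w.length → w.length ≤ k →
      Filter.Tendsto
        (fun α => opn (matD (ℏ α) (w.map (fun v => T α v)) (hh α) -
          T α (pbIter pb w h)))
        Filter.atTop (𝓝 0)) :
    (Filter.Tendsto (fun α => opn (fh α * hh α - T α (f * h)))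
        Filter.atTop (𝓝 0)) ∧
    (∀ w : List F, 1 ≤ w.length → w.length ≤ k →
      Filter.Tendsto
        (fun α => opn (matD (ℏ α) (w.map (fun v => T α v)) (fh α * hh α) -
          T α (pbIter pb w (f * h))))
        Filter.atTop (𝓝 0)) :=
  product_sequence_Ck_converges_general pb hleib Nseq ℏ T hbound hprod k hreg f h fh hh hf0 hh0 hfk
    hhk
end

section
/- For the fuzzy torus: let ω = exp(2πi/N), g the diagonal N×N matrix with g_{kk} = ω^{k−1}, and h the cyclic shift matrix (h_{k,k+1} = 1, h_{N,1} = 1), so hg = ω gh. Define X^1 = (g†+g)/(2√2), X^2 = i(g†−g)/(2√2), X^3 = (h†+h)/(2√2), X^4 = i(h†−h)/(2√2), and ℏ = sin(π/N). Then [X^1, X^2] = 0, [X^3, X^4] = 0, and −ℏ^{-2} ∑_{i,j=1}^4 [X^i, X^j]² = 2·1_N. -/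
/-!
Write `s = 1/(2√2)`, `P = g`, `U = h`. Then `X¹, X²` are `s(P⁻¹ + P)`, `is(P⁻¹ - P)` and likewise
`X³, X⁴` for `U`, so `[X¹, X²] = [X³, X⁴] = 0`. For the remaining commutators the identity
`(a + b)(c + d) - (a - b)(c - d) = 2(ad + bc)` collapses the sum of squares to `32 s⁴` times four
products `[P⁻ᵃ, U⁻ᵇ][Pᵃ, Uᵇ]` (`a, b = ±1`). Since `UᵇPᵃ = ωᵃᵇPᵃUᵇ`, each of them is
`(1 - ωᵃᵇ)² ω⁻ᵃᵇ = ω + ω⁻¹ - 2 = -4 sin²(π/N)`.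
-/

open scoped BigOperators Matrix

/-- The clock matrix `g` with `g_{kk} = ω^{k-1}`, `ω = e^{2πi/N}`. -/
noncomputable def clock (N : ℕ) : Matrix (Fin N) (Fin N) ℂ :=
  Matrix.diagonal fun k => Complex.exp (2 * Real.pi * Complex.I / N) ^ (k : ℕ)

/-- The cyclic shift matrix `h` with `h_{k,k+1} = 1`, `h_{N,1} = 1`. -/
def shift (N : ℕ) : Matrix (Fin N) (Fin N) ℂ :=
  Matrix.of fun k l => if (l : ℕ) = ((k : ℕ) + 1) % N then 1 else 0

open Complex Matrix

attribute [local instance] LieRing.ofAssociativeRing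

theorem sum_sq_lie_fin_four {A : Type*} [Ring A] (Z : Fin 4 → A) (h01 : ⁅Z 0, Z 1⁆ = 0)
    (h23 : ⁅Z 2, Z 3⁆ = 0) :
    ∑ i, ∑ j, ⁅Z i, Z j⁆ ^ 2 =
      2 • ((⁅Z 0, Z 2⁆ ^ 2 + ⁅Z 1, Z 2⁆ ^ 2) + (⁅Z 0, Z 3⁆ ^ 2 + ⁅Z 1, Z 3⁆ ^ 2)) := by
  simp only [Fin.sum_univ_four, lie_self, ← lie_skew (Z 1) (Z 0),
    ← lie_skew (Z 2) (Z 0), ← lie_skew (Z 3) (Z 0), ← lie_skew (Z 2) (Z 1),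
    ← lie_skew (Z 3) (Z 1), ← lie_skew (Z 3) (Z 2), neg_sq, h01, h23, neg_zero, ne_eq,
    OfNat.ofNat_ne_zero, not_false_eq_true, zero_pow, zero_add, add_zero]
  abel

section ComplexAlgebra

variable {A : Type*} [Ring A] [Algebra ℂ A]

theorem smul_add_mul_add_add_I_smul_sub_mul_sub (s : ℂ) (a b c d : A) :
    (s • (a + b)) * (s • (c + d)) + ((s * I) • (a - b)) * ((s * I) • (c - d)) =
      (2 * s ^ 2) • (a * d + b * c) := by
  simp only [smul_mul_smul_comm, mul_add, add_mul, mul_sub, sub_mul]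
  rw [mul_mul_mul_comm, I_mul_I]
  module

theorem lie_sq_add_lie_sq (s : ℂ) (a b y : A) :
    ⁅s • (a + b), y⁆ ^ 2 + ⁅(s * I) • (a - b), y⁆ ^ 2 =
      (2 * s ^ 2) • (⁅a, y⁆ * ⁅b, y⁆ + ⁅b, y⁆ * ⁅a, y⁆) := by
  rw [smul_lie, smul_lie, add_lie, sub_lie, sq, sq, smul_add_mul_add_add_I_smul_sub_mul_sub]

theorem lie_mul_lie_add_lie_mul_lie (s : ℂ) (x y c d : A) :
    ⁅x, s • (c + d)⁆ * ⁅y, s • (c + d)⁆ + ⁅x, (s * I) • (c - d)⁆ * ⁅y, (s * I) • (c - d)⁆ =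
      (2 * s ^ 2) • (⁅x, c⁆ * ⁅y, d⁆ + ⁅x, d⁆ * ⁅y, c⁆) := by
  simp only [lie_smul, lie_add, lie_sub]
  exact smul_add_mul_add_add_I_smul_sub_mul_sub s _ _ _ _

theorem lie_units_inv_add_smul_sub_eq_zero (P : Aˣ) (a b : ℂ) :
    ⁅a • ((↑P⁻¹ : A) + P), b • ((↑P⁻¹ : A) - P)⁆ = 0 := by
  have hP : Commute (↑P⁻¹ : A) P := (Commute.refl (P : A)).units_inv_left
  exact ((((Commute.refl _).sub_right hP).add_left (hP.symm.sub_right (Commute.refl _))).smul_left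
    a |>.smul_right b).lie_eq

def WeylCommute (ω : ℂ) (P U : A) : Prop :=
  U * P = ω • (P * U)

namespace WeylCommute

variable {ω : ℂ}

theorem lie_eq_smul_mul {P U : A} (h : WeylCommute ω P U) : ⁅P, U⁆ = (1 - ω) • (P * U) := by
  rw [Ring.lie_def, h, sub_smul, one_smul]

variable {P U : Aˣ}

theorem units_inv (h : WeylCommute ω (P : A) U) : WeylCommute ω (↑P⁻¹ : A) ↑U⁻¹ := by
  unfold WeylCommute at *
  calc (↑U⁻¹ * ↑P⁻¹ : A) = ↑P⁻¹ * ↑U⁻¹ * (U * P) * (↑U⁻¹ * ↑P⁻¹) := by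
        simp [mul_assoc]
    _ = ω • (↑P⁻¹ * ↑U⁻¹) := by
        rw [h]; simp [mul_assoc]

theorem units_inv_right (hω : ω ≠ 0) (h : WeylCommute ω (P : A) U) :
    WeylCommute ω⁻¹ (P : A) ↑U⁻¹ := by
  unfold WeylCommute at *
  calc (↑U⁻¹ * P : A) = ω⁻¹ • (↑U⁻¹ * (ω • (P * U)) * ↑U⁻¹) := by
        rw [mul_smul_comm, smul_mul_assoc, inv_smul_smul₀ hω]; simp [mul_assoc]
    _ = ω⁻¹ • (P * ↑U⁻¹) := by
        rw [← h]; simp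

theorem lie_units_inv_mul_lie (hω : ω ≠ 0) (h : WeylCommute ω (P : A) U) :
    ⁅(↑P⁻¹ : A), (↑U⁻¹ : A)⁆ * ⁅(P : A), (U : A)⁆ = (ω + ω⁻¹ - 2) • (1 : A) := by
  have hcycle : (↑P⁻¹ * ↑U⁻¹ * (P * U) : A) = ω⁻¹ • 1 := by
    rw [mul_assoc, ← mul_assoc (↑U⁻¹ : A), h.units_inv_right hω]
    simp [mul_assoc]
  rw [h.units_inv.lie_eq_smul_mul, h.lie_eq_smul_mul, smul_mul_smul_comm, hcycle, smul_smul]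
  congr 1
  field_simp
  ring

theorem sum_sq_lie_eq (hω : ω ≠ 0) (h : WeylCommute ω (P : A) U) (s : ℂ) (Z : Fin 4 → A)
    (hZ0 : Z 0 = s • ((↑P⁻¹ : A) + P)) (hZ1 : Z 1 = (s * I) • ((↑P⁻¹ : A) - P))
    (hZ2 : Z 2 = s • ((↑U⁻¹ : A) + U)) (hZ3 : Z 3 = (s * I) • ((↑U⁻¹ : A) - U)) :
    ∑ i, ∑ j, ⁅Z i, Z j⁆ ^ 2 = (32 * s ^ 4 * (ω + ω⁻¹ - 2)) • (1 : A) := by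
  have h01 : ⁅Z 0, Z 1⁆ = 0 := by rw [hZ0, hZ1]; exact lie_units_inv_add_smul_sub_eq_zero P _ _
  have h23 : ⁅Z 2, Z 3⁆ = 0 := by rw [hZ2, hZ3]; exact lie_units_inv_add_smul_sub_eq_zero U _ _
  -- the pairs `(P±, U±)`, `(P±, U∓)` satisfy the Weyl relation with phase `ω`, resp. `ω⁻¹`
  have e1 := h.lie_units_inv_mul_lie hω
  have e2 := (h.units_inv_right hω).lie_units_inv_mul_lie (inv_ne_zero hω)
  have e3 := (h.units_inv.units_inv_right hω).lie_units_inv_mul_lie (inv_ne_zero hω)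
  have e4 := h.units_inv.lie_units_inv_mul_lie hω
  simp only [inv_inv, add_comm ω⁻¹ ω] at e2 e3 e4
  rw [sum_sq_lie_fin_four Z h01 h23, hZ0, hZ1, lie_sq_add_lie_sq, lie_sq_add_lie_sq, ← smul_add,
    add_add_add_comm, hZ2, hZ3, lie_mul_lie_add_lie_mul_lie, lie_mul_lie_add_lie_mul_lie,
    e1, e2, e3, e4]
  module

end WeylCommute

end ComplexAlgebra

theorem Matrix.permMatrix_mul_diagonal {n R : Type*} [Fintype n] [DecidableEq n]
    [NonAssocSemiring R] (σ : Equiv.Perm n) (d : n → R) :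
    σ.permMatrix R * diagonal d = diagonal (d ∘ σ) * σ.permMatrix R := by
  ext i j
  by_cases hij : σ i = j
  · subst hij; simp
  · simp [hij]

theorem diagonal_pow_mem_unitaryGroup (N : ℕ) {ζ : ℂ} (hζ : ‖ζ‖ = 1) :
    diagonal (fun k : Fin N => ζ ^ (k : ℕ)) ∈ unitaryGroup (Fin N) ℂ := by
  rw [mem_unitaryGroup_iff, star_eq_conjTranspose, diagonal_conjTranspose, diagonal_mul_diagonal,
    ← diagonal_one]
  congr 1
  ext k
  simp only [Pi.star_apply, star_pow, RCLike.star_def, ← mul_pow, mul_conj', hζ]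
  norm_num

theorem shift_eq_permMatrix (N : ℕ) [NeZero N] :
    shift N = (Equiv.addRight (1 : Fin N)).permMatrix ℂ := by
  ext k l
  simp [shift, Fin.ext_iff, Fin.val_add, eq_comm]

theorem shift_mem_unitaryGroup (N : ℕ) [NeZero N] : shift N ∈ unitaryGroup (Fin N) ℂ := by
  rw [mem_unitaryGroup_iff', star_eq_conjTranspose, shift_eq_permMatrix, conjTranspose_permMatrix,
    ← permMatrix_mul, mul_inv_cancel, permMatrix_one]

theorem shift_mul_diagonal_pow (N : ℕ) [NeZero N] {ζ : ℂ} (hζ : ζ ^ N = 1) :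
    shift N * diagonal (fun k : Fin N => ζ ^ (k : ℕ)) =
      ζ • (diagonal (fun k : Fin N => ζ ^ (k : ℕ)) * shift N) := by
  rw [shift_eq_permMatrix, permMatrix_mul_diagonal, ← smul_mul, ← diagonal_smul]
  congr 2
  ext k
  simp only [Function.comp_apply, Equiv.coe_addRight, Pi.smul_apply, smul_eq_mul]
  rw [Fin.val_add, Fin.val_one', Nat.add_mod_mod, ← pow_eq_pow_mod _ hζ, pow_succ']

theorem exp_two_mul_I_add_inv_sub_two (θ : ℝ) :
    exp (2 * θ * I) + (exp (2 * θ * I))⁻¹ - 2 = -4 * (Real.sin θ : ℂ) ^ 2 := by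
  rw [← exp_neg, ofReal_sin, ← neg_mul, ← two_cos, cos_two_mul, cos_sq']
  ring

/-- The fuzzy Clifford torus: with `X¹,…,X⁴` built from the clock and shift
matrices and `ℏ = sin(π/N)`, one has `hg = ω gh`, `[X¹,X²] = 0 = [X³,X⁴]`, and
`−ℏ⁻² ∑_{i,j} [Xⁱ,Xʲ]² = 2·1`. -/
theorem fuzzy_torus_commutators (N : ℕ) (hN : 1 < N) :
    (shift N * clock N =
      Complex.exp (2 * Real.pi * Complex.I / N) • (clock N * shift N)) ∧
    (∀ X : Fin 4 → Matrix (Fin N) (Fin N) ℂ,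
      X 0 = (2 * Real.sqrt 2 : ℂ)⁻¹ • ((clock N)ᴴ + clock N) →
      X 1 = ((2 * Real.sqrt 2 : ℂ)⁻¹ * Complex.I) • ((clock N)ᴴ - clock N) →
      X 2 = (2 * Real.sqrt 2 : ℂ)⁻¹ • ((shift N)ᴴ + shift N) →
      X 3 = ((2 * Real.sqrt 2 : ℂ)⁻¹ * Complex.I) • ((shift N)ᴴ - shift N) →
        (X 0 * X 1 - X 1 * X 0 = 0) ∧
        (X 2 * X 3 - X 3 * X 2 = 0) ∧
        (-(((Real.sin (Real.pi / N) : ℂ) ^ 2)⁻¹) •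
            ∑ i : Fin 4, ∑ j : Fin 4,
              (X i * X j - X j * X i) ^ 2 =
          (2 : ℂ) • (1 : Matrix (Fin N) (Fin N) ℂ))) := by
  have : NeZero N := ⟨by omega⟩
  set ω := exp (2 * Real.pi * I / N) with hω_def
  have hprim : IsPrimitiveRoot ω N := isPrimitiveRoot_exp N (by omega)
  have hrel : shift N * clock N = ω • (clock N * shift N) :=
    shift_mul_diagonal_pow N hprim.pow_eq_one
  refine ⟨hrel, fun X hX0 hX1 hX2 hX3 => ?_⟩
  let g := Unitary.toUnits
    ⟨clock N, diagonal_pow_mem_unitaryGroup N (hprim.norm'_eq_one (by omega))⟩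
  let h := Unitary.toUnits ⟨shift N, shift_mem_unitaryGroup N⟩
  simp only [← Ring.lie_def]
  refine ⟨hX0 ▸ hX1 ▸ lie_units_inv_add_smul_sub_eq_zero g _ _,
    hX2 ▸ hX3 ▸ lie_units_inv_add_smul_sub_eq_zero h _ _, ?_⟩
  rw [WeylCommute.sum_sq_lie_eq (P := g) (U := h) (exp_ne_zero _) hrel _ X hX0 hX1 hX2 hX3,
    smul_smul]
  have hcos : ω + ω⁻¹ - 2 = -4 * (Real.sin (Real.pi / N) : ℂ) ^ 2 := by
    rw [hω_def, show 2 * Real.pi * I / N = 2 * ((Real.pi / N : ℝ) : ℂ) * I by push_cast; ring]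
    exact exp_two_mul_I_add_inv_sub_two _
  have hsin : (Real.sin (Real.pi / N) : ℂ) ≠ 0 := ofReal_ne_zero.mpr
    (Real.sin_pos_of_pos_of_lt_pi (by positivity)
      (div_lt_self Real.pi_pos (by exact_mod_cast hN))).ne'
  have hsqrt : ((Real.sqrt 2 : ℝ) : ℂ) ^ 2 = 2 := mod_cast Real.sq_sqrt zero_le_two
  rw [hcos]
  congr 1
  field_simp
  rw [show (Real.sqrt 2 : ℂ) ^ 4 = ((Real.sqrt 2 : ℂ) ^ 2) ^ 2 by ring, hsqrt]
  norm_num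
end

section
/- Fuzzy torus sequence that C⁰-converges but not C¹-converges: with H = h + h† (h the N×N cyclic shift) and θ̂ = diag(ℏ^s, 0,…,0) for fixed 0 < s ≤ 1, ℏ = sin(π/N): (1) ||θ̂|| = ℏ^s → 0; (2) the matrix A = (iℏ)^{-1}[θ̂, H] has eigenvalues ±i√2 ℏ^{s−1} and 0 (with multiplicity N−2), hence ||A|| = √2 ℏ^{s−1} does not tend to 0. -/
/-!
With indices in `ℤ/N`, `θ̂` is `ℏ^s` times the rank-one projection `e₀ e₀*`, so
`‖θ̂‖ = ℏ^s → 0`. For self-adjoint `H`, `[e₀ e₀*, H] = e₀ w* - w e₀*` with `w = H e₀`, and when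
`w ⊥ e₀` this operator has norm `‖w‖`: Bessel's inequality for the orthonormal pair
`e₀, w / ‖w‖` bounds it above, and it maps `w` to `‖w‖² e₀`. For `H = h + h†` the column
`w = e₁ + e₋₁` is orthogonal to `e₀` and has norm `√2`, so `‖A‖ = ℏ⁻¹ · ℏ^s · √2`, which is at
least `√2` when `s ≤ 1`.
-/

open scoped BigOperators Topology Matrix

/-- `θ̂ = diag(ℏ^s, 0, …, 0)` with `ℏ = sin(π/N)`. -/
noncomputable def thetaHat (N : ℕ) (s : ℝ) : Matrix (Fin N) (Fin N) ℂ :=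
  Matrix.of fun k l =>
    if k = (0 : ℕ) ∧ l = (0 : ℕ) then ((Real.sin (Real.pi / N) ^ s : ℝ) : ℂ) else 0

/-- `A = (iℏ)⁻¹ [θ̂, H]` with `H = h + h†`. -/
noncomputable def Amat (N : ℕ) (s : ℝ) : Matrix (Fin N) (Fin N) ℂ :=
  ((Complex.I * (Real.sin (Real.pi / N) : ℂ))⁻¹) •
    (thetaHat N s * (shift N + (shift N)ᴴ) -
      (shift N + (shift N)ᴴ) * thetaHat N s)

open scoped InnerProductSpace

namespace InnerProductSpace
variable {𝕜 E : Type*} [RCLike 𝕜] [NormedAddCommGroup E] [InnerProductSpace 𝕜 E]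

theorem norm_inner_sq_add_norm_inner_sq_le {e f : E} (he : ‖e‖ = 1) (hf : ‖f‖ = 1)
    (hef : ⟪e, f⟫_𝕜 = 0) (x : E) : ‖⟪e, x⟫_𝕜‖ ^ 2 + ‖⟪f, x⟫_𝕜‖ ^ 2 ≤ ‖x‖ ^ 2 := by
  have hv : Orthonormal 𝕜 ![e, f] := by
    rw [orthonormal_iff_ite]
    intro i j
    fin_cases i <;> fin_cases j <;> simp [he, hf, hef, inner_eq_zero_symm.mp hef]
  simpa [Fin.sum_univ_two] using hv.sum_inner_products_le x (s := Finset.univ)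

theorem norm_rankOne_sub_rankOne {e w : E} (he : ‖e‖ = 1) (hew : ⟪e, w⟫_𝕜 = 0) :
    ‖rankOne 𝕜 e w - rankOne 𝕜 w e‖ = ‖w‖ := by
  rcases eq_or_ne w 0 with rfl | hw
  · simp
  set f := (‖w‖⁻¹ : 𝕜) • w
  have hwf : w = (‖w‖ : 𝕜) • f := by
    simp [f, smul_smul, norm_ne_zero_iff.mpr hw]
  have hf : ‖f‖ = 1 := by simp [f, norm_smul, norm_ne_zero_iff.mpr hw]
  have hef : ⟪e, f⟫_𝕜 = 0 := by simp [f, inner_smul_right, hew]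
  refine le_antisymm (ContinuousLinearMap.opNorm_le_bound _ (norm_nonneg w) fun x => ?_) ?_
  · have hpyth : ‖(rankOne 𝕜 e w - rankOne 𝕜 w e) x‖ ^ 2
        = ‖w‖ ^ 2 * (‖⟪e, x⟫_𝕜‖ ^ 2 + ‖⟪f, x⟫_𝕜‖ ^ 2) := by
      rw [sub_apply, rankOne_apply, rankOne_apply, @norm_sub_sq 𝕜, hwf]
      simp [norm_smul, inner_smul_left, inner_smul_right, he, hf, hef]
      ring
    apply le_of_sq_le_sq _ (by positivity)
    rw [hpyth, mul_pow]
    gcongr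
    exact norm_inner_sq_add_norm_inner_sq_le he hf hef x
  · have h := (rankOne 𝕜 e w - rankOne 𝕜 w e).le_opNorm w
    rw [sub_apply, rankOne_apply, rankOne_apply, hew, zero_smul, sub_zero,
      inner_self_eq_norm_sq_to_K, norm_smul, he, mul_one, norm_pow, RCLike.norm_ofReal, abs_norm,
      sq] at h
    exact le_of_mul_le_mul_right h (norm_pos_iff.mpr hw)

theorem rankOne_self_mul_sub_mul_rankOne_self {T : E →L[𝕜] E}
    (hT : (T : E →ₗ[𝕜] E).IsSymmetric) (e : E) :
    rankOne 𝕜 e e * T - T * rankOne 𝕜 e e = rankOne 𝕜 e (T e) - rankOne 𝕜 (T e) e := by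
  ext x
  have hsymm := hT e x
  simp only [ContinuousLinearMap.coe_coe] at hsymm
  simp [hsymm]

theorem norm_rankOne_self_mul_sub_mul_rankOne_self {T : E →L[𝕜] E}
    (hT : (T : E →ₗ[𝕜] E).IsSymmetric) {e : E} (he : ‖e‖ = 1) (heT : ⟪e, T e⟫_𝕜 = 0) :
    ‖rankOne 𝕜 e e * T - T * rankOne 𝕜 e e‖ = ‖T e‖ := by
  rw [rankOne_self_mul_sub_mul_rankOne_self hT, norm_rankOne_sub_rankOne he heT]

end InnerProductSpace

namespace Matrix
variable {𝕜 n : Type*} [RCLike 𝕜] [Fintype n] [DecidableEq n]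
open InnerProductSpace

theorem toEuclideanCLM_single (i j : n) (c : 𝕜) :
    toEuclideanCLM (n := n) (𝕜 := 𝕜) (single i j c) =
      rankOne 𝕜 (EuclideanSpace.single i c) (EuclideanSpace.single j (1 : 𝕜)) := by
  ext x k
  simp [mulVec, dotProduct, single_apply, EuclideanSpace.inner_single_left, ite_and, mul_comm,
    eq_comm (a := i)]

theorem norm_toEuclideanCLM_single_mul_sub_mul_single {H : Matrix n n 𝕜} (hH : H.IsHermitian)
    {i : n} (hii : H i i = 0) (c : 𝕜) :
    ‖toEuclideanCLM (n := n) (𝕜 := 𝕜) (single i i c * H - H * single i i c)‖ =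
      ‖c‖ * ‖WithLp.toLp 2 (fun k => H k i)‖ := by
  have hsingle : single i i c = c • single i i (1 : 𝕜) := by simp
  rw [hsingle, smul_mul_assoc, mul_smul_comm, ← smul_sub, map_smul, norm_smul, map_sub, map_mul,
    map_mul, toEuclideanCLM_single]
  have hT : (toEuclideanCLM (n := n) (𝕜 := 𝕜) H : EuclideanSpace 𝕜 n →ₗ[𝕜] _).IsSymmetric := by
    rw [coe_toEuclideanCLM_eq_toEuclideanLin]
    exact isSymmetric_toEuclideanLin_iff.mpr hH
  rw [norm_rankOne_self_mul_sub_mul_rankOne_self hT]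
  · congr 2
    ext k
    simp
  · simp
  · simp [EuclideanSpace.inner_single_left, hii]

end Matrix

theorem EuclideanSpace.norm_single_one_add_single_one {𝕜 n : Type*} [RCLike 𝕜] [Fintype n]
    [DecidableEq n] {i j : n} (hij : i ≠ j) :
    ‖EuclideanSpace.single i (1 : 𝕜) + EuclideanSpace.single j 1‖ = √2 := by
  rw [← Real.sqrt_sq (norm_nonneg _), @norm_add_sq 𝕜]
  simp [EuclideanSpace.inner_single_left, hij.symm]
  norm_num

theorem shift_apply {N : ℕ} [NeZero N] (k l : Fin N) :
    shift N k l = if l = k + 1 then 1 else 0 := by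
  simp [shift, Fin.ext_iff, Fin.val_add]

theorem thetaHat_eq_single {N : ℕ} [NeZero N] (s : ℝ) :
    thetaHat N s = Matrix.single 0 0 ((Real.sin (Real.pi / N) ^ s : ℝ) : ℂ) := by
  ext k l
  simp only [thetaHat, Matrix.of_apply, Matrix.single_apply, Fin.val_eq_zero_iff,
    eq_comm (a := (0 : Fin N))]

theorem isHermitian_shift_add_conjTranspose (N : ℕ) : (shift N + (shift N)ᴴ).IsHermitian := by
  simp [Matrix.IsHermitian, Matrix.conjTranspose_add, add_comm]

theorem toLp_shift_add_conjTranspose_col_zero (N : ℕ) [NeZero N] :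
    WithLp.toLp 2 (fun k => (shift N + (shift N)ᴴ) k 0) =
      EuclideanSpace.single (-1) (1 : ℂ) + EuclideanSpace.single 1 1 := by
  ext k
  simp [shift_apply, eq_neg_iff_add_eq_zero, @eq_comm _ 0 (k + 1)]

theorem sin_pi_div_natCast_nonneg (N : ℕ) : 0 ≤ Real.sin (Real.pi / N) := by
  rcases N.eq_zero_or_pos with rfl | hN
  · simp
  · exact Real.sin_nonneg_of_nonneg_of_le_pi (by positivity)
      (div_le_self Real.pi_nonneg (by exact_mod_cast hN))

theorem sin_pi_div_natCast_pos {N : ℕ} (hN : 2 ≤ N) : 0 < Real.sin (Real.pi / N) :=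
  Real.sin_pos_of_pos_of_lt_pi (by positivity)
    (div_lt_self Real.pi_pos (by exact_mod_cast hN))

theorem tendsto_sin_pi_div_natCast :
    Filter.Tendsto (fun N : ℕ => Real.sin (Real.pi / N)) Filter.atTop (𝓝 0) := by
  simpa [Function.comp_def] using
    (Real.continuous_sin.tendsto 0).comp (tendsto_const_div_atTop_nhds_zero_nat Real.pi)

theorem opn_thetaHat {N : ℕ} (hN : 1 ≤ N) (s : ℝ) :
    opn (thetaHat N s) = Real.sin (Real.pi / N) ^ s := by
  have : NeZero N := ⟨by omega⟩
  rw [opn, thetaHat_eq_single, Matrix.toEuclideanCLM_single, InnerProductSpace.norm_rankOne]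
  simp [abs_of_nonneg (Real.rpow_nonneg (sin_pi_div_natCast_nonneg N) s)]

theorem tendsto_opn_thetaHat {s : ℝ} (hs : 0 < s) :
    Filter.Tendsto (fun N : ℕ => opn (thetaHat N s)) Filter.atTop (𝓝 0) := by
  have h := tendsto_sin_pi_div_natCast.rpow_const (p := s) (Or.inr hs.le)
  rw [Real.zero_rpow hs.ne'] at h
  refine h.congr' ?_
  filter_upwards [Filter.eventually_ge_atTop 1] with N hN
  exact (opn_thetaHat hN s).symm

theorem opn_Amat {N : ℕ} (hN : 3 ≤ N) (s : ℝ) :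
    opn (Amat N s) = √2 * Real.sin (Real.pi / N) ^ (s - 1) := by
  obtain ⟨n, rfl⟩ := Nat.exists_eq_add_of_le' hN
  have hpos := sin_pi_div_natCast_pos (N := n + 3) (by omega)
  have h00 : (shift (n + 3) + (shift (n + 3))ᴴ) 0 0 = 0 := by simp [shift_apply]
  have h1 : (-1 : Fin (n + 3)) ≠ 1 := by simp [Fin.ext_iff, Fin.coe_neg_one]
  rw [opn, Amat, map_smul, norm_smul, thetaHat_eq_single,
    Matrix.norm_toEuclideanCLM_single_mul_sub_mul_single
      (isHermitian_shift_add_conjTranspose _) h00,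
    toLp_shift_add_conjTranspose_col_zero, EuclideanSpace.norm_single_one_add_single_one h1]
  simp only [norm_inv, norm_mul, Complex.norm_I, one_mul, Complex.norm_real,
    Real.norm_of_nonneg hpos.le, Real.norm_of_nonneg (Real.rpow_nonneg hpos.le s),
    Real.rpow_sub_one hpos.ne']
  ring

theorem sqrt_two_le_opn_Amat {N : ℕ} (hN : 3 ≤ N) {s : ℝ} (hs : s ≤ 1) :
    √2 ≤ opn (Amat N s) := by
  have hpos := sin_pi_div_natCast_pos (N := N) (by omega)
  rw [opn_Amat hN]
  exact le_mul_of_one_le_right (by positivity)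
    (Real.one_le_rpow_of_pos_of_le_one_of_nonpos hpos (Real.sin_le_one _) (by linarith))

/-- A sequence in the fuzzy torus that `C⁰`-converges to `0` but does not
`C¹`-converge: for `0 < s ≤ 1`, `‖θ̂‖ = ℏ^s → 0`, while
`A = (iℏ)⁻¹[θ̂, h + h†]` has `‖A‖ = √2 ℏ^{s−1}`, which does not tend to `0`. -/
theorem fuzzy_torus_C0_not_C1_sequence (s : ℝ) (hs1 : 0 < s) (hs2 : s ≤ 1) :
    (∀ N : ℕ, 1 ≤ N →
      opn (thetaHat N s) = Real.sin (Real.pi / N) ^ s) ∧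
    Filter.Tendsto (fun N : ℕ => opn (thetaHat N s)) Filter.atTop (𝓝 0) ∧
    (∀ N : ℕ, 3 ≤ N →
      opn (Amat N s) = Real.sqrt 2 * Real.sin (Real.pi / N) ^ (s - 1)) ∧
    ¬ Filter.Tendsto (fun N : ℕ => opn (Amat N s)) Filter.atTop (𝓝 0) := by
  refine ⟨fun N hN => opn_thetaHat hN s, tendsto_opn_thetaHat hs1, fun N hN => opn_Amat hN s,
    fun h => ?_⟩
  have h2 : √2 ≤ 0 := ge_of_tendsto h <|
    (Filter.eventually_ge_atTop 3).mono fun N hN => sqrt_two_le_opn_Amat hN hs2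
  exact h2.not_gt (by positivity)
end
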